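/- arXiv:1412.0409 — 7 statements merged into one kernel-verified Lean document; each statement's English description precedes it below -/
import Mathlib

section
/- Let ρ > 0, R = e^{2ρ}, and let B = {z ∈ ℂ : |z − ((R+1)/2) i| < (R−1)/2} be the hyperbolic ball of radius ρ centered at e^{ρ} i. For any real numbers a, b with 0 ≤ a ≤ b ≤ 2ρ, the hyperbolic area of the set {z ∈ B : a < log(Im z) < b} equals 2 ∫_a^b √( R(e^{−t} − e^{−2t}) + e^{−t} − 1 ) dt. -/
open Complex Metric Set MeasureTheory

/-- The hyperbolic area measure on the upper half-plane: density `(Im z)⁻²`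
against two-dimensional Lebesgue measure on `ℂ`. -/
noncomputable def hypArea : Measure ℂ :=
  volume.withDensity (fun z => ENNReal.ofReal (1 / z.im ^ 2))

/-! In coordinates `z = x + iy` the ball is `x ^ 2 < (R - y) * (y - 1)`, so by Tonelli the
hyperbolic area of the slice is `∫ 2 √((R - y) (y - 1)) / y ^ 2 dy` over `e ^ a < y < e ^ b`.
The substitution `y = e ^ t` gives the stated integrand, because
`R (e^{-t} - e^{-2t}) + e^{-t} - 1 = e^{-2t} (R - e^t) (e^t - 1)`. -/

open scoped ENNReal

lemma withDensity_comp_im_apply {f : ℝ → ℝ≥0∞} (hf : Measurable f) {S : Set ℂ}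
    (hS : MeasurableSet S) :
    volume.withDensity (fun z : ℂ => f z.im) S =
      ∫⁻ y, f y * volume {x : ℝ | (⟨x, y⟩ : ℂ) ∈ S} := by
  have hT : MeasurableSet (measurableEquivRealProd.symm ⁻¹' S) :=
    measurableEquivRealProd.symm.measurable hS
  rw [withDensity_apply _ hS,
    ← volume_preserving_equiv_real_prod.symm.setLIntegral_comp_preimage_emb
      measurableEquivRealProd.symm.measurableEmbedding, ← withDensity_apply _ hT]
  simp only [measurableEquivRealProd_symm_apply]
  rw [Measure.volume_eq_prod, ← prod_withDensity_right hf, Measure.prod_apply_symm hT,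
    lintegral_withDensity_eq_lintegral_mul _ hf (measurable_measure_prodMk_right hT)]
  rfl

lemma volume_setOf_sq_lt (c : ℝ) : volume {x : ℝ | x ^ 2 < c} = ENNReal.ofReal (2 * √c) := by
  have : {x : ℝ | x ^ 2 < c} = Ioo (-√c) √c := by
    ext x
    simp only [mem_ofPred_eq, mem_Ioo, ← abs_lt, ← Real.sqrt_sq_eq_abs]
    exact (Real.sqrt_lt_sqrt_iff (sq_nonneg x)).symm
  rw [this, Real.volume_Ioo]
  ring_nf

lemma hypArea_setOf_sq_re_lt {g : ℝ → ℝ} (hg : Measurable g) {s : Set ℝ}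
    (hs : MeasurableSet s) :
    hypArea {z : ℂ | z.re ^ 2 < g z.im ∧ z.im ∈ s} =
      ∫⁻ y in s, ENNReal.ofReal (2 * √(g y) / y ^ 2) := by
  have hS : MeasurableSet {z : ℂ | z.re ^ 2 < g z.im ∧ z.im ∈ s} :=
    (measurableSet_lt (by fun_prop) (hg.comp measurable_im)).inter (measurable_im hs)
  rw [hypArea,
    withDensity_comp_im_apply (f := fun y => ENNReal.ofReal (1 / y ^ 2)) (by fun_prop) hS,
    ← lintegral_indicator hs]
  refine lintegral_congr fun y => ?_
  by_cases hy : y ∈ s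
  · simp only [indicator_of_mem hy, mem_ofPred_eq, hy, and_true, volume_setOf_sq_lt]
    rw [← ENNReal.ofReal_mul (by positivity)]
    ring_nf
  · simp [hy]

lemma norm_sub_mul_I_lt_iff {R : ℝ} (hR : 1 < R) (z : ℂ) :
    ‖z - ((R + 1) / 2) * I‖ < (R - 1) / 2 ↔ z.re ^ 2 < (R - z.im) * (z.im - 1) := by
  rw [← dist_eq_norm, dist_eq_re_im, Real.sqrt_lt' (by linarith)]
  have hc : (((R + 1) / 2 : ℂ) * I).re = 0 ∧ (((R + 1) / 2 : ℂ) * I).im = (R + 1) / 2 := by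
    constructor <;> simp
  rw [hc.1, hc.2]
  constructor <;> intro h <;> nlinarith

lemma setOf_norm_sub_lt_and_log_im_mem_eq {R : ℝ} (hR : 1 < R) (a b : ℝ) :
    {z : ℂ | ‖z - ((R + 1) / 2) * I‖ < (R - 1) / 2 ∧
        a < Real.log z.im ∧ Real.log z.im < b} =
      {z : ℂ | z.re ^ 2 < (R - z.im) * (z.im - 1) ∧ z.im ∈ Real.exp '' Ioo a b} := by
  ext z
  simp only [mem_ofPred_eq, norm_sub_mul_I_lt_iff hR]
  constructor
  · rintro ⟨hz, hlog⟩
    have him : 0 < z.im := by nlinarith [sq_nonneg z.re]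
    exact ⟨hz, Real.log z.im, hlog, Real.exp_log him⟩
  · rintro ⟨hz, t, ht, hzt⟩
    refine ⟨hz, ?_⟩
    rw [← hzt, Real.log_exp]
    exact ht

lemma setLIntegral_image_exp {s : Set ℝ} (hs : MeasurableSet s) (φ : ℝ → ℝ≥0∞) :
    ∫⁻ y in Real.exp '' s, φ y =
      ∫⁻ t in s, ENNReal.ofReal (Real.exp t) * φ (Real.exp t) := by
  rw [lintegral_image_eq_lintegral_abs_deriv_mul hs
    (fun t _ => (Real.hasDerivAt_exp t).hasDerivWithinAt) Real.exp_injective.injOn]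
  simp only [abs_of_pos (Real.exp_pos _)]

lemma ofReal_intervalIntegral_eq_setLIntegral_Ioo {F : ℝ → ℝ} {a b : ℝ} (hab : a ≤ b)
    (hF : ContinuousOn F (Icc a b)) (hF0 : ∀ t ∈ Ioo a b, 0 ≤ F t) :
    ENNReal.ofReal (∫ t in a..b, F t) = ∫⁻ t in Ioo a b, ENNReal.ofReal (F t) := by
  rw [intervalIntegral.integral_of_le hab, integral_Ioc_eq_integral_Ioo,
    ofReal_integral_eq_lintegral_ofReal (hF.integrableOn_Icc.mono_set Ioo_subset_Icc_self)
      ((ae_restrict_mem measurableSet_Ioo).mono hF0)]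

lemma sqrt_eq_exp_neg_mul_sqrt (R t : ℝ) :
    √(R * (Real.exp (-t) - Real.exp (-2 * t)) + Real.exp (-t) - 1) =
      Real.exp (-t) * √((R - Real.exp t) * (Real.exp t - 1)) := by
  have h2 : Real.exp (-2 * t) = Real.exp (-t) ^ 2 := by
    rw [← Real.exp_nat_mul]; ring_nf
  have hinv : Real.exp (-t) * Real.exp t = 1 := by rw [← Real.exp_add]; simp
  have key : R * (Real.exp (-t) - Real.exp (-2 * t)) + Real.exp (-t) - 1 =
      Real.exp (-t) ^ 2 * ((R - Real.exp t) * (Real.exp t - 1)) := by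
    rw [h2]
    linear_combination
      (Real.exp (-t) * Real.exp t + 1 - R * Real.exp (-t) - Real.exp (-t)) * hinv
  rw [key, Real.sqrt_mul (sq_nonneg _), Real.sqrt_sq (Real.exp_pos _).le]

theorem area_of_horizontal_slice_of_ball_general (ρ R : ℝ) (hρ : 0 < ρ) (hR : R = Real.exp (2 * ρ))
    (a b : ℝ) (hab : a ≤ b) :
    hypArea {z : ℂ | ‖z - ((R + 1) / 2) * Complex.I‖ < (R - 1) / 2 ∧
        a < Real.log z.im ∧ Real.log z.im < b} =
      ENNReal.ofReal
        (2 * ∫ t in a..b,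
          Real.sqrt (R * (Real.exp (-t) - Real.exp (-2 * t)) + Real.exp (-t) - 1)) := by
  have hR1 : 1 < R := hR ▸ Real.one_lt_exp_iff.mpr (by positivity)
  rw [setOf_norm_sub_lt_and_log_im_mem_eq hR1,
    hypArea_setOf_sq_re_lt (g := fun y => (R - y) * (y - 1)) (by fun_prop)
      (Real.image_exp_Ioo a b ▸ measurableSet_Ioo),
    setLIntegral_image_exp measurableSet_Ioo, ← intervalIntegral.integral_const_mul,
    ofReal_intervalIntegral_eq_setLIntegral_Ioo hab (by fun_prop) fun t _ => by positivity]
  refine setLIntegral_congr_fun measurableSet_Ioo fun t _ => ?_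
  rw [← ENNReal.ofReal_mul (Real.exp_pos t).le, sqrt_eq_exp_neg_mul_sqrt, Real.exp_neg]
  congr 1
  field_simp

theorem area_of_horizontal_slice_of_ball (ρ R : ℝ) (hρ : 0 < ρ) (hR : R = Real.exp (2 * ρ))
    (a b : ℝ) (ha : 0 ≤ a) (hab : a ≤ b) (hb : b ≤ 2 * ρ) :
    hypArea {z : ℂ | ‖z - ((R + 1) / 2) * Complex.I‖ < (R - 1) / 2 ∧
        a < Real.log z.im ∧ Real.log z.im < b} =
      ENNReal.ofReal
        (2 * ∫ t in a..b,
          Real.sqrt (R * (Real.exp (-t) - Real.exp (-2 * t)) + Real.exp (-t) - 1)) :=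
  area_of_horizontal_slice_of_ball_general ρ R hρ hR a b hab
end

section
/- For ρ > 0 let B_ρ denote the hyperbolic ball of radius ρ centered at e^{ρ} i in the upper half-plane, and let A(ρ) be its hyperbolic area. Then for every bounded continuous function g : ℝ → ℝ, (1/A(ρ)) ∫_{B_ρ} g(log(Im z)) (Im z)^{-2} dLeb(z) converges, as ρ → ∞, to (2/π) ∫_0^∞ g(t) √(e^{−t} − e^{−2t}) dt. -/
open Complex Metric Set MeasureTheory Filter

/-- The hyperbolic ball of radius `ρ` centered at `e^ρ i` in the upper half-plane,
with the hyperbolic distance `dist z w = 2 arsinh(|z-w| / (2 √(Im z · Im w)))`. -/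
noncomputable def hypBall (ρ : ℝ) : Set ℂ :=
  {z : ℂ | 0 < z.im ∧
    2 * Real.arsinh (‖z - Real.exp ρ * Complex.I‖ /
      (2 * Real.sqrt (z.im * Real.exp ρ))) < ρ}

/-!
The hyperbolic ball `B_ρ` is the Euclidean disc with center `e^ρ cosh ρ · i` and radius
`e^ρ sinh ρ`, i.e. `{x + iy | x² < (e^{2ρ} - y)(y - 1)}`. Integrating out `x`, the integral of
`h(y) y⁻²` over `B_ρ` becomes `2 e^ρ ∫_1^∞ √((1 - e^{-2ρ} y)(y - 1)) h(y) y⁻² dy`; the factor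
`2 e^ρ` cancels in the average, and dominated convergence (by `C √(y - 1) / y²`) lets
`e^{-2ρ} → 0`. In the limit, the numerator becomes the target integral after `y = e^t`, and the
area becomes `∫_1^∞ √(y - 1) / y² dy = π / 2`, with primitive `arctan √(y - 1) - √(y - 1) / y`.
-/

open Topology
open scoped Real
open scoped UpperHalfPlane

noncomputable def hypCenter (ρ : ℝ) : ℍ :=
  ⟨Real.exp ρ * I, by simpa [-Complex.ofReal_exp] using Real.exp_pos ρ⟩

@[simp] lemma coe_hypCenter (ρ : ℝ) : (hypCenter ρ : ℂ) = Real.exp ρ * I := rfl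

@[simp] lemma hypCenter_re (ρ : ℝ) : (hypCenter ρ).re = 0 := by
  simp [UpperHalfPlane.re]

@[simp] lemma hypCenter_im (ρ : ℝ) : (hypCenter ρ).im = Real.exp ρ := by
  simp [UpperHalfPlane.im, -Complex.ofReal_exp]

lemma hypBall_eq_image_ball (ρ : ℝ) : hypBall ρ = ((↑) : ℍ → ℂ) '' ball (hypCenter ρ) ρ := by
  ext z
  constructor
  · rintro ⟨hz, hdist⟩
    refine ⟨⟨z, hz⟩, ?_, rfl⟩
    rwa [mem_ball, UpperHalfPlane.dist_eq, hypCenter_im, coe_hypCenter, Complex.dist_eq]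
  · rintro ⟨w, hw, rfl⟩
    rw [mem_ball, UpperHalfPlane.dist_eq, hypCenter_im, coe_hypCenter, Complex.dist_eq] at hw
    exact ⟨w.im_pos, hw⟩

lemma hypBall_eq_ball (ρ : ℝ) :
    hypBall ρ = ball ((Real.exp ρ * Real.cosh ρ : ℝ) * I) (Real.exp ρ * Real.sinh ρ) := by
  rw [hypBall_eq_image_ball, UpperHalfPlane.image_coe_ball, hypCenter_im]
  congr 1
  apply Complex.ext <;> simp [UpperHalfPlane.center, -Complex.ofReal_exp]

lemma measurableSet_hypBall (ρ : ℝ) : MeasurableSet (hypBall ρ) := by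
  rw [hypBall_eq_ball]
  exact measurableSet_ball

lemma one_lt_im_of_mem_hypBall {ρ : ℝ} {z : ℂ} (hz : z ∈ hypBall ρ) : 1 < z.im := by
  rw [hypBall_eq_image_ball] at hz
  obtain ⟨w, hw, rfl⟩ := hz
  have hle := UpperHalfPlane.im_div_exp_dist_le (hypCenter ρ) w
  rw [UpperHalfPlane.dist_comm, hypCenter_im] at hle
  have hlt : Real.exp (dist w (hypCenter ρ)) < Real.exp ρ := Real.exp_lt_exp.2 hw
  rw [← one_lt_div (Real.exp_pos _)] at hlt
  exact hlt.trans_le hle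

lemma hypArea_real_apply (s : Set ℂ) : (hypArea s).toReal = ∫ z in s, 1 / z.im ^ 2 := by
  rw [hypArea, withDensity_apply', integral_eq_lintegral_of_nonneg_ae
    (ae_of_all _ fun z => by positivity)
    (by fun_prop : Measurable fun z : ℂ => 1 / z.im ^ 2).aestronglyMeasurable]

lemma setIntegral_ball_comp_im {c : ℂ} {r : ℝ} (hr : 0 ≤ r) {f : ℝ → ℝ}
    (hf : IntegrableOn (fun z => f z.im) (ball c r)) :
    ∫ z in ball c r, f z.im = ∫ y, 2 * √(r ^ 2 - (y - c.im) ^ 2) * f y := by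
  set S : Set (ℝ × ℝ) := {p | (p.1 - c.re) ^ 2 < r ^ 2 - (p.2 - c.im) ^ 2}
  have hS : MeasurableSet S := measurableSet_lt (by fun_prop) (by fun_prop)
  have hball : ball c r = measurableEquivRealProd ⁻¹' S := by
    ext z
    rw [mem_ball, Complex.dist_eq, ← pow_lt_pow_iff_left₀ (norm_nonneg _) hr two_ne_zero,
      Complex.sq_norm, normSq_apply]
    simp only [S, mem_preimage, mem_ofPred_eq, measurableEquivRealProd_apply, sub_re, sub_im, sq]
    rw [lt_sub_iff_add_lt]
  have hvol := Complex.volume_preserving_equiv_real_prod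
  have hemb := measurableEquivRealProd.measurableEmbedding
  rw [hball] at hf
  replace hf := (hvol.integrableOn_comp_preimage hemb (f := fun p : ℝ × ℝ => f p.2)).1 hf
  have hint := hf.integrable_indicator hS
  rw [Measure.volume_eq_prod] at hint
  have hchange : ∫ z in ball c r, f z.im = ∫ p in S, f p.2 := by
    rw [hball]
    exact hvol.setIntegral_preimage_emb hemb (fun p : ℝ × ℝ => f p.2) S
  rw [hchange, ← integral_indicator hS,
    Measure.volume_eq_prod, integral_prod_symm _ hint]
  congr 1
  ext y
  have hslice : (fun x => S.indicator (fun p : ℝ × ℝ => f p.2) (x, y)) =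
      (ball c.re √(r ^ 2 - (y - c.im) ^ 2)).indicator (fun _ => f y) := by
    ext x
    have hmem : (x, y) ∈ S ↔ x ∈ ball c.re √(r ^ 2 - (y - c.im) ^ 2) := by
      rw [mem_ball, Real.dist_eq, Real.lt_sqrt (abs_nonneg _), sq_abs, lt_sub_iff_add_lt]
      simp only [S, mem_ofPred_eq, lt_sub_iff_add_lt]
    by_cases hx : (x, y) ∈ S
    · rw [indicator_of_mem hx, indicator_of_mem (hmem.1 hx)]
    · rw [indicator_of_notMem hx, indicator_of_notMem (mt hmem.2 hx)]
  rw [hslice, integral_indicator_const _ measurableSet_ball,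
    Real.volume_real_ball (Real.sqrt_nonneg _), smul_eq_mul]

lemma sq_exp_mul_sinh_sub_sq (ρ y : ℝ) :
    (Real.exp ρ * Real.sinh ρ) ^ 2 - (y - Real.exp ρ * Real.cosh ρ) ^ 2 =
      Real.exp ρ ^ 2 * ((1 - Real.exp (-2 * ρ) * y) * (y - 1)) := by
  rw [Real.sinh_eq, Real.cosh_eq, show -2 * ρ = -ρ + -ρ by ring, Real.exp_add, Real.exp_neg]
  field_simp
  ring

lemma setIntegral_hypBall_comp_im {ρ : ℝ} (hρ : 0 ≤ ρ) {f : ℝ → ℝ}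
    (hf : IntegrableOn (fun z => f z.im) (hypBall ρ)) :
    ∫ z in hypBall ρ, f z.im =
      2 * Real.exp ρ * ∫ y in Ioi 1, √((1 - Real.exp (-2 * ρ) * y) * (y - 1)) * f y := by
  have hr : 0 ≤ Real.exp ρ * Real.sinh ρ := by positivity
  rw [hypBall_eq_ball] at hf ⊢
  rw [setIntegral_ball_comp_im hr hf, ← integral_const_mul]
  have hε : Real.exp (-2 * ρ) ≤ 1 := Real.exp_le_one_iff.2 (by linarith)
  rw [setIntegral_eq_integral_of_forall_compl_eq_zero fun y hy => ?_]
  · congr 1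
    ext y
    rw [mul_I_im, ofReal_re, sq_exp_mul_sinh_sub_sq,
      Real.sqrt_mul (by positivity), Real.sqrt_sq (Real.exp_nonneg _)]
    ring
  · have hy : y ≤ 1 := not_lt.1 hy
    have hεy : Real.exp (-2 * ρ) * y ≤ 1 := by nlinarith [Real.exp_pos (-2 * ρ)]
    rw [Real.sqrt_eq_zero'.2 (mul_nonpos_of_nonneg_of_nonpos (by linarith) (by linarith)),
      zero_mul, mul_zero]

lemma integrableOn_hypBall_comp_im_div_sq {h : ℝ → ℝ} (hh : Measurable h) {C : ℝ}
    (hC : ∀ y, ‖h y‖ ≤ C) (ρ : ℝ) : IntegrableOn (fun z => h z.im / z.im ^ 2) (hypBall ρ) := by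
  refine Measure.integrableOn_of_bounded (M := C) ?_
    (by fun_prop : Measurable fun z : ℂ => h z.im / z.im ^ 2).aestronglyMeasurable <|
    ae_restrict_of_forall_mem (measurableSet_hypBall ρ) fun z hz => ?_
  · rw [hypBall_eq_ball]
    exact measure_ball_lt_top.ne
  · have hy : 1 ≤ z.im ^ 2 := one_le_pow₀ (one_lt_im_of_mem_hypBall hz).le
    rw [norm_div, Real.norm_of_nonneg (sq_nonneg z.im)]
    exact (div_le_self (norm_nonneg _) hy).trans (hC _)

lemma hasDerivAt_arctan_sqrt_sub_one_sub_div {y : ℝ} (hy : 1 < y) :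
    HasDerivAt (fun y => Real.arctan √(y - 1) - √(y - 1) / y) (√(y - 1) / y ^ 2) y := by
  have hpos : 0 < √(y - 1) := Real.sqrt_pos.2 (by linarith)
  have hy0 : y ≠ 0 := by linarith
  have hsqrt : HasDerivAt (fun y => √(y - 1)) (1 / (2 * √(y - 1))) y := by
    simpa using ((hasDerivAt_id' y).sub_const 1).sqrt (by linarith)
  refine (hsqrt.arctan.sub (hsqrt.div (hasDerivAt_id' y) (by linarith))).congr_deriv ?_
  field_simp
  rw [Real.sq_sqrt (by linarith)]
  ring

lemma tendsto_sqrt_sub_one_div_atTop : Tendsto (fun y => √(y - 1) / y) atTop (𝓝 0) := by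
  refine tendsto_of_tendsto_of_tendsto_of_le_of_le' tendsto_const_nhds
    (tendsto_inv_atTop_zero.comp Real.tendsto_sqrt_atTop) ?_ ?_
  · filter_upwards [eventually_ge_atTop 0] with y hy
    positivity
  · filter_upwards [eventually_gt_atTop 0] with y hy
    rw [Function.comp_apply, inv_eq_one_div, ← Real.sqrt_div_self']
    gcongr
    linarith

lemma tendsto_arctan_sqrt_sub_one_sub_div_atTop :
    Tendsto (fun y => Real.arctan √(y - 1) - √(y - 1) / y) atTop (𝓝 (π / 2)) := by
  have harctan : Tendsto (fun y => Real.arctan √(y - 1)) atTop (𝓝 (π / 2)) :=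
    (Real.tendsto_arctan_atTop.mono_right nhdsWithin_le_nhds).comp <|
      Real.tendsto_sqrt_atTop.comp (tendsto_atTop_add_const_right _ (-1) tendsto_id)
  simpa using harctan.sub tendsto_sqrt_sub_one_div_atTop

lemma continuousWithinAt_arctan_sqrt_sub_one_sub_div :
    ContinuousWithinAt (fun y => Real.arctan √(y - 1) - √(y - 1) / y) (Ici 1) 1 :=
  ContinuousAt.continuousWithinAt (by fun_prop (disch := norm_num))

lemma integrableOn_sqrt_sub_one_div_sq : IntegrableOn (fun y => √(y - 1) / y ^ 2) (Ioi 1) :=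
  integrableOn_Ioi_deriv_of_nonneg continuousWithinAt_arctan_sqrt_sub_one_sub_div
    (fun _ hy => hasDerivAt_arctan_sqrt_sub_one_sub_div hy) (fun _ _ => by positivity)
    tendsto_arctan_sqrt_sub_one_sub_div_atTop

lemma integral_sqrt_sub_one_div_sq : ∫ y in Ioi 1, √(y - 1) / y ^ 2 = π / 2 := by
  rw [integral_Ioi_of_hasDerivAt_of_nonneg continuousWithinAt_arctan_sqrt_sub_one_sub_div
    (fun _ hy => hasDerivAt_arctan_sqrt_sub_one_sub_div hy) (fun _ _ => by positivity)
    tendsto_arctan_sqrt_sub_one_sub_div_atTop]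
  simp

lemma tendsto_setIntegral_sqrt_one_sub_mul {h : ℝ → ℝ} (hh : Measurable h) {C : ℝ}
    (hC : ∀ y, ‖h y‖ ≤ C) :
    Tendsto (fun ε => ∫ y in Ioi 1, √((1 - ε * y) * (y - 1)) * (h y / y ^ 2)) (𝓝[≥] 0)
      (𝓝 (∫ y in Ioi 1, √(y - 1) * (h y / y ^ 2))) := by
  refine tendsto_integral_filter_of_dominated_convergence (fun y => C * (√(y - 1) / y ^ 2))
    (Eventually.of_forall fun ε => by fun_prop) ?_
    (integrableOn_sqrt_sub_one_div_sq.const_mul C) ?_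
  · filter_upwards [self_mem_nhdsWithin] with ε (hε : 0 ≤ ε)
    refine ae_restrict_of_forall_mem measurableSet_Ioi fun y (hy : 1 < y) => ?_
    have hsqrt : √((1 - ε * y) * (y - 1)) ≤ √(y - 1) :=
      Real.sqrt_le_sqrt (by nlinarith [mul_nonneg hε (by linarith : (0 : ℝ) ≤ y)])
    rw [norm_mul, norm_div, Real.norm_of_nonneg (Real.sqrt_nonneg _), norm_pow,
      Real.norm_of_nonneg (by linarith : (0 : ℝ) ≤ y)]
    calc √((1 - ε * y) * (y - 1)) * (‖h y‖ / y ^ 2) ≤ √(y - 1) * (C / y ^ 2) := by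
          gcongr
          exact hC y
      _ = C * (√(y - 1) / y ^ 2) := by ring
  · refine ae_of_all _ fun y => ?_
    have hcont : Continuous fun ε : ℝ => √((1 - ε * y) * (y - 1)) * (h y / y ^ 2) := by
      fun_prop
    simpa using (hcont.tendsto 0).mono_left nhdsWithin_le_nhds

lemma integral_Ioi_sqrt_sub_one_mul_comp_log (g : ℝ → ℝ) :
    ∫ y in Ioi 1, √(y - 1) * (g (Real.log y) / y ^ 2) =
      ∫ t in Ioi 0, g t * √(Real.exp (-t) - Real.exp (-2 * t)) := by
  rw [← Real.exp_zero, ← integral_comp_exp_Ioi]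
  congr 1
  ext t
  have hexp : Real.exp (-t) - Real.exp (-2 * t) = (Real.exp t)⁻¹ ^ 2 * (Real.exp t - 1) := by
    rw [show -2 * t = -t + -t by ring, Real.exp_add, Real.exp_neg]
    field_simp
  rw [Real.log_exp, Real.exp_zero, smul_eq_mul, hexp, Real.sqrt_mul (sq_nonneg _),
    Real.sqrt_sq (inv_nonneg.2 (Real.exp_nonneg t))]
  field_simp

theorem averages_tendsto_of_boundedContinuous (g : BoundedContinuousFunction ℝ ℝ) :
    Tendsto
      (fun ρ : ℝ =>
        (1 / (hypArea (hypBall ρ)).toReal) *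
          ∫ z in hypBall ρ, g (Real.log z.im) / z.im ^ 2 ∂volume)
      atTop
      (nhds ((2 / Real.pi) * ∫ t in Set.Ioi (0 : ℝ),
        g t * Real.sqrt (Real.exp (-t) - Real.exp (-2 * t)))) := by
  have hgm : Measurable fun y => g (Real.log y) := g.continuous.measurable.comp Real.measurable_log
  have hgC : ∀ y, ‖g (Real.log y)‖ ≤ ‖g‖ := fun y => g.norm_coe_le_norm _
  have hε : Tendsto (fun ρ => Real.exp (-2 * ρ)) atTop (𝓝[≥] 0) :=
    (Real.tendsto_exp_atBot_nhdsGT.comp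
      (tendsto_id.const_mul_atTop_of_neg (by norm_num))).mono_right
      (nhdsWithin_mono _ Ioi_subset_Ici_self)
  have hnum := (tendsto_setIntegral_sqrt_one_sub_mul hgm hgC).comp hε
  have hden :=
    (tendsto_setIntegral_sqrt_one_sub_mul measurable_const (fun _ => le_refl ‖(1 : ℝ)‖)).comp hε
  rw [integral_Ioi_sqrt_sub_one_mul_comp_log] at hnum
  simp only [mul_one_div, integral_sqrt_sub_one_div_sq] at hden
  convert (hnum.div hden (by positivity)).congr' ?_ using 2
  · field_simp
  filter_upwards [eventually_ge_atTop 0] with ρ hρ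
  have hN := setIntegral_hypBall_comp_im (f := fun y => g (Real.log y) / y ^ 2) hρ
    (integrableOn_hypBall_comp_im_div_sq hgm hgC ρ)
  have hD := setIntegral_hypBall_comp_im (f := fun y => 1 / y ^ 2) hρ
    (integrableOn_hypBall_comp_im_div_sq measurable_const (fun _ => le_refl ‖(1 : ℝ)‖) ρ)
  simp only [mul_one_div] at hN hD
  rw [hypArea_real_apply, hN, hD]
  simp only [Function.comp_apply, Pi.div_apply]
  field_simp
end

section
/- Let 0 < R < R' < 1, let A = 1/log(R'/R), and let φ_{R,R'} : ℂ → ℝ be defined by φ_{R,R'}(z) = 1 if |z| ≤ R, φ_{R,R'}(z) = A·log(R'/|z|) if R ≤ |z| ≤ R', and φ_{R,R'}(z) = 0 if |z| ≥ R'. Then for every function f : ℂ → ℝ that is C² on a neighborhood of the closed disk {|z| ≤ R'}, ∫_𝔻 φ_{R,R'}(z) Δf(z) dLeb(z) = A ( ∫_0^{2π} f(R' e^{iθ}) dθ − ∫_0^{2π} f(R e^{iθ}) dθ ), where Δf denotes the Euclidean Laplacian of f. -/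
open Complex Metric Set MeasureTheory

/-- The Euclidean Laplacian `∂²f/∂x² + ∂²f/∂y²` of a function `f : ℂ → ℝ`. -/
noncomputable def lap (f : ℂ → ℝ) (z : ℂ) : ℝ :=
  fderiv ℝ (fun w => fderiv ℝ f w 1) z 1 +
    fderiv ℝ (fun w => fderiv ℝ f w Complex.I) z Complex.I

/-- The function `φ_{R,R'}`: equal to `1` on `{|z| ≤ R}`, to `A log(R'/|z|)` on
`{R ≤ |z| ≤ R'}` (with `A = 1/log(R'/R)`), and to `0` on `{|z| ≥ R'}`. -/
noncomputable def phiRR (R R' : ℝ) (z : ℂ) : ℝ :=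
  if ‖z‖ ≤ R then 1
  else if ‖z‖ ≤ R' then (1 / Real.log (R' / R)) * Real.log (R' / ‖z‖)
  else 0


/-! In polar coordinates `z = r e^{iθ}` one has `r² Δf = r ∂ᵣ(r ∂ᵣ f) + ∂²_θ f`. Against the area
element `r dr dθ`, the angular term integrates to zero over every circle by periodicity. For each
`θ`, the radial term `∫ φ(r) ∂ᵣ(r ∂ᵣ f) dr` is integrated by parts: on `[0, R]` the weight is `1`,
and on `[R, R']` it is `A log(R'/r)`, whose derivative `-A/r` cancels the factor `r` and leaves
`A ∫ ∂ᵣ f dr = A (f(R' e^{iθ}) - f(R e^{iθ}))`; the boundary terms at `r = R` cancel. -/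

open Real

section SecondDerivative

variable {E F : Type*} [NormedAddCommGroup E] [NormedSpace ℝ E] [NormedAddCommGroup F]
  [NormedSpace ℝ F] {f : E → F}

theorem ContDiffAt.hasDerivAt_fderiv_apply {γ w : ℝ → E} {γ' w' : E} {t : ℝ}
    (hf : ContDiffAt ℝ 2 f (γ t)) (hγ : HasDerivAt γ γ' t) (hw : HasDerivAt w w' t) :
    HasDerivAt (fun s => fderiv ℝ f (γ s) (w s))
      (fderiv ℝ (fderiv ℝ f) (γ t) γ' (w t) + fderiv ℝ f (γ t) w') t := by
  have hDf := ((hf.fderiv_right (m := 1) le_rfl).differentiableAt one_ne_zero).hasFDerivAt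
  simpa using (hDf.comp_hasDerivAt t hγ).clm_apply hw

theorem ContDiffAt.fderiv_fderiv_apply {x : E} (hf : ContDiffAt ℝ 2 f x) (v w : E) :
    fderiv ℝ (fun y => fderiv ℝ f y w) x v = fderiv ℝ (fderiv ℝ f) x v w := by
  have hDf := ((hf.fderiv_right (m := 1) le_rfl).differentiableAt one_ne_zero).hasFDerivAt
  simp [(hDf.clm_apply (hasFDerivAt_const w x)).fderiv]

theorem ContDiffAt.continuousAt_fderiv_fderiv {x : E} (hf : ContDiffAt ℝ 2 f x) :
    ContinuousAt (fderiv ℝ (fderiv ℝ f)) x :=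
  (hf.fderiv_right (m := 1) le_rfl).continuousAt_fderiv one_ne_zero

end SecondDerivative

/-- Rotation invariance of the trace `Φ 1 1 + Φ I I` that defines the Laplacian. -/
theorem ContinuousLinearMap.apply_add_apply_mul_I {F : Type*} [NormedAddCommGroup F]
    [NormedSpace ℝ F] (Φ : ℂ →L[ℝ] ℂ →L[ℝ] F) (z : ℂ) :
    Φ z z + Φ (z * I) (z * I) = normSq z • (Φ 1 1 + Φ I I) := by
  obtain ⟨a, b, rfl⟩ : ∃ a b : ℝ, z = a • (1 : ℂ) + b • I := ⟨z.re, z.im, by simp⟩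
  have hzI : (a • (1 : ℂ) + b • I) * I = (-b) • (1 : ℂ) + a • I := by simp [Complex.ext_iff]
  have hnorm : normSq (a • (1 : ℂ) + b • I) = a ^ 2 + b ^ 2 := by simp [normSq_apply]; ring
  rw [hzI, hnorm]
  simp only [map_add, map_smul, add_apply, FunLike.coe_smul, Pi.smul_apply]
  module

theorem ContDiffAt.lap_eq_fderiv_fderiv {f : ℂ → ℝ} {z : ℂ} (hf : ContDiffAt ℝ 2 f z) :
    lap f z = fderiv ℝ (fderiv ℝ f) z 1 1 + fderiv ℝ (fderiv ℝ f) z I I := by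
  rw [lap, hf.fderiv_fderiv_apply, hf.fderiv_fderiv_apply]

theorem ContDiffAt.continuousAt_lap {f : ℂ → ℝ} {z : ℂ} (hf : ContDiffAt ℝ 2 f z) :
    ContinuousAt (lap f) z := by
  have hD2 := hf.continuousAt_fderiv_fderiv
  refine ContinuousAt.congr
    (f := fun w => fderiv ℝ (fderiv ℝ f) w 1 1 + fderiv ℝ (fderiv ℝ f) w I I) (by fun_prop) ?_
  filter_upwards [hf.eventually (by simp)] with w hw using hw.lap_eq_fderiv_fderiv.symm

theorem hasDerivAt_circleMap_radius (c : ℂ) (r θ : ℝ) :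
    HasDerivAt (fun s => circleMap c s θ) (exp (θ * I)) r := by
  simpa [circleMap] using ((hasDerivAt_id r).ofReal_comp.mul_const (exp (θ * I))).const_add c

theorem continuous_circleMap_zero_uncurry :
    Continuous fun p : ℝ × ℝ => circleMap 0 p.1 p.2 := by
  simp only [circleMap_zero]
  fun_prop

theorem circleMap_zero_eq_smul (r θ : ℝ) : circleMap 0 r θ = r • exp (θ * I) := by
  simp [circleMap_zero, Complex.real_smul]

theorem Complex.polarCoord_symm_eq_circleMap (p : ℝ × ℝ) :
    Complex.polarCoord.symm p = circleMap 0 p.1 p.2 := by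
  simp [circleMap_zero, Complex.exp_mul_I, ← Complex.ofReal_cos, ← Complex.ofReal_sin]

section PolarLaplacian

variable (f : ℂ → ℝ) (r θ : ℝ)

/-- `∂ᵣ(r ∂ᵣ f)` at the point with polar coordinates `(r, θ)`. -/
noncomputable def radialTerm : ℝ :=
  fderiv ℝ (fderiv ℝ f) (circleMap 0 r θ) (exp (θ * I)) (circleMap 0 r θ) +
    fderiv ℝ f (circleMap 0 r θ) (exp (θ * I))

/-- `∂²_θ f` at the point with polar coordinates `(r, θ)`. -/
noncomputable def angularTerm : ℝ :=
  fderiv ℝ (fderiv ℝ f) (circleMap 0 r θ) (circleMap 0 r θ * I) (circleMap 0 r θ * I) -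
    fderiv ℝ f (circleMap 0 r θ) (circleMap 0 r θ)

variable {f r θ}

theorem hasDerivAt_radialTerm (hf : ContDiffAt ℝ 2 f (circleMap 0 r θ)) :
    HasDerivAt (fun s => fderiv ℝ f (circleMap 0 s θ) (circleMap 0 s θ)) (radialTerm f r θ) r :=
  hf.hasDerivAt_fderiv_apply (γ := fun s => circleMap 0 s θ) (w := fun s => circleMap 0 s θ)
    (hasDerivAt_circleMap_radius 0 r θ) (hasDerivAt_circleMap_radius 0 r θ)

theorem hasDerivAt_angularTerm (hf : ContDiffAt ℝ 2 f (circleMap 0 r θ)) :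
    HasDerivAt (fun t => fderiv ℝ f (circleMap 0 r t) (circleMap 0 r t * I))
      (angularTerm f r θ) θ := by
  have h := hf.hasDerivAt_fderiv_apply (w := fun t => circleMap 0 r t * I)
    (hasDerivAt_circleMap 0 r θ) ((hasDerivAt_circleMap 0 r θ).mul_const I)
  refine h.congr_deriv ?_
  rw [angularTerm, mul_assoc _ I I, I_mul_I, mul_neg_one, map_neg, sub_eq_add_neg]

theorem sq_mul_lap_circleMap (hf : ContDiffAt ℝ 2 f (circleMap 0 r θ)) :
    r ^ 2 * lap f (circleMap 0 r θ) = r * radialTerm f r θ + angularTerm f r θ := by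
  have key := (fderiv ℝ (fderiv ℝ f) (circleMap 0 r θ)).apply_add_apply_mul_I (circleMap 0 r θ)
  rw [normSq_eq_norm_sq, norm_circleMap_zero, sq_abs, ← hf.lap_eq_fderiv_fderiv, smul_eq_mul]
    at key
  rw [← key, radialTerm, angularTerm, circleMap_zero_eq_smul]
  simp only [map_smul, smul_mul_assoc, FunLike.coe_smul, Pi.smul_apply, smul_eq_mul]
  ring

theorem continuousAt_radialTerm_uncurry {p : ℝ × ℝ}
    (hf : ContDiffAt ℝ 2 f (circleMap 0 p.1 p.2)) :
    ContinuousAt (fun p : ℝ × ℝ => radialTerm f p.1 p.2) p := by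
  have hz : ContinuousAt (fun p : ℝ × ℝ => circleMap 0 p.1 p.2) p :=
    continuous_circleMap_zero_uncurry.continuousAt
  have hE : ContinuousAt (fun p : ℝ × ℝ => exp (p.2 * I)) p := by fun_prop
  exact (((hf.continuousAt_fderiv_fderiv.comp (f := fun p : ℝ × ℝ => circleMap 0 p.1 p.2)
    hz).clm_apply hE).clm_apply hz).add
    (((hf.continuousAt_fderiv two_ne_zero).comp (f := fun p : ℝ × ℝ => circleMap 0 p.1 p.2)
      hz).clm_apply hE)

theorem continuous_angularTerm (hf : ∀ θ, ContDiffAt ℝ 2 f (circleMap 0 r θ)) :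
    Continuous (angularTerm f r) := by
  refine continuous_iff_continuousAt.2 fun θ => ?_
  have hz := (continuous_circleMap 0 r).continuousAt (x := θ)
  have hzI := hz.mul_const I
  exact ((((hf θ).continuousAt_fderiv_fderiv.comp hz).clm_apply hzI).clm_apply hzI).sub
    ((((hf θ).continuousAt_fderiv two_ne_zero).comp hz).clm_apply hz)

theorem integral_Ioo_angularTerm_eq_zero (hf : ∀ θ, ContDiffAt ℝ 2 f (circleMap 0 r θ)) :
    ∫ θ in Ioo (-π) π, angularTerm f r θ = 0 := by
  rw [← integral_Ioc_eq_integral_Ioo, ← intervalIntegral.integral_of_le (by linarith [pi_pos]),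
    intervalIntegral.integral_eq_sub_of_hasDerivAt (fun θ _ => hasDerivAt_angularTerm (hf θ))
      ((continuous_angularTerm hf).intervalIntegrable _ _)]
  have hπ : circleMap 0 r π = circleMap 0 r (-π) := by
    rw [← periodic_circleMap 0 r (-π)]
    ring_nf
  rw [hπ, sub_self]

end PolarLaplacian

theorem Function.Periodic.setIntegral_Ioo_neg_pi_pi {h : ℝ → ℝ} (hh : Periodic h (2 * π)) :
    ∫ θ in Ioo (-π) π, h θ = ∫ θ in 0..2 * π, h θ := by
  have h := hh.intervalIntegral_add_eq (-π) 0
  rw [zero_add, show -π + 2 * π = π by ring] at h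
  rw [← integral_Ioc_eq_integral_Ioo, ← intervalIntegral.integral_of_le (by linarith [pi_pos]), h]

theorem integral_eq_setIntegral_polarCoord (G : ℂ → ℝ) :
    ∫ z, G z = ∫ p in Ioi (0 : ℝ) ×ˢ Ioo (-π) π, p.1 * G (circleMap 0 p.1 p.2) := by
  rw [← Complex.integral_comp_polarCoord_symm, polarCoord_target]
  simp_rw [Complex.polarCoord_symm_eq_circleMap, smul_eq_mul]

theorem integrableOn_Ioi_prod_Ioo_of_continuousOn {F : ℝ × ℝ → ℝ} {R' a b : ℝ}
    (hF : ContinuousOn F (Icc 0 R' ×ˢ Icc a b)) (h0 : ∀ p : ℝ × ℝ, R' < p.1 → F p = 0) :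
    IntegrableOn F (Ioi 0 ×ˢ Ioo a b) :=
  (hF.integrableOn_compact (isCompact_Icc.prod isCompact_Icc)).of_forall_sdiff_eq_zero
    (measurableSet_Ioi.prod measurableSet_Ioo) fun p hp =>
      h0 p (lt_of_not_ge fun h => hp.2 ⟨⟨hp.1.1.le, h⟩, Ioo_subset_Icc_self hp.1.2⟩)

theorem integral_radial_mul_lap_eq {ψ : ℝ → ℝ} {f : ℂ → ℝ} {R' : ℝ} (hψ : Continuous ψ)
    (hψ0 : ∀ r, R' < r → ψ r = 0) (hf : ∀ z ∈ closedBall (0 : ℂ) R', ContDiffAt ℝ 2 f z) :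
    ∫ z, ψ ‖z‖ * lap f z = ∫ θ in Ioo (-π) π, ∫ r in Ioi (0 : ℝ), ψ r * radialTerm f r θ := by
  set T := Ioi (0 : ℝ) ×ˢ Ioo (-π) π
  have hT : MeasurableSet T := measurableSet_Ioi.prod measurableSet_Ioo
  have hfK : ∀ p ∈ Icc 0 R' ×ˢ Icc (-π) π, ContDiffAt ℝ 2 f (circleMap 0 p.1 p.2) :=
    fun p hp => hf _ (by simpa [norm_circleMap_zero, abs_of_nonneg hp.1.1] using hp.1.2)
  have hz := continuous_circleMap_zero_uncurry
  have hW : IntegrableOn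
      (fun p : ℝ × ℝ => p.1 * (ψ ‖circleMap 0 p.1 p.2‖ * lap f (circleMap 0 p.1 p.2))) T := by
    refine integrableOn_Ioi_prod_Ioo_of_continuousOn (R' := R')
      (fun p hp => ContinuousAt.continuousWithinAt ?_)
      fun p hp => by simp [norm_circleMap_zero, hψ0 _ (hp.trans_le (le_abs_self _))]
    exact continuous_fst.continuousAt.mul ((hψ.comp (continuous_norm.comp hz)).continuousAt.mul
      ((hfK p hp).continuousAt_lap.comp (f := fun p : ℝ × ℝ => circleMap 0 p.1 p.2)
        hz.continuousAt))
  have hH₁ : IntegrableOn (fun p : ℝ × ℝ => ψ p.1 * radialTerm f p.1 p.2) T := by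
    refine integrableOn_Ioi_prod_Ioo_of_continuousOn (R' := R')
      (fun p hp => ContinuousAt.continuousWithinAt ?_) fun p hp => by simp [hψ0 _ hp]
    exact (hψ.comp continuous_fst).continuousAt.mul (continuousAt_radialTerm_uncurry (hfK p hp))
  have hsplit : ∀ p ∈ T, p.1 * (ψ ‖circleMap 0 p.1 p.2‖ * lap f (circleMap 0 p.1 p.2)) =
      ψ p.1 * radialTerm f p.1 p.2 + ψ p.1 / p.1 * angularTerm f p.1 p.2 := by
    rintro ⟨r, θ⟩ ⟨hr, -⟩
    change 0 < r at hr
    rw [norm_circleMap_zero, abs_of_pos hr]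
    rcases le_or_gt r R' with hrR' | hrR'
    · have key := sq_mul_lap_circleMap (r := r) (θ := θ)
        (hf _ (by simpa [norm_circleMap_zero, abs_of_pos hr]))
      field_simp
      linear_combination ψ r * key
    · simp [hψ0 r hrR']
  -- `ψ r / r` is singular at `r = 0`; integrability comes from the other two integrands.
  have hH₂ : IntegrableOn (fun p : ℝ × ℝ => ψ p.1 / p.1 * angularTerm f p.1 p.2) T :=
    (hW.sub hH₁).congr_fun (fun p hp => by simp only [Pi.sub_apply, hsplit p hp]; ring) hT
  have hangular : ∀ r ∈ Ioi (0 : ℝ), ∫ θ in Ioo (-π) π, ψ r / r * angularTerm f r θ = 0 := by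
    intro r hr
    rw [integral_const_mul]
    rcases le_or_gt r R' with hrR' | hrR'
    · rw [integral_Ioo_angularTerm_eq_zero fun θ => hf _ (by
        simpa [norm_circleMap_zero, abs_of_pos (mem_Ioi.1 hr)]), mul_zero]
    · simp [hψ0 r hrR']
  rw [integral_eq_setIntegral_polarCoord, setIntegral_congr_fun hT hsplit, integral_add hH₁ hH₂]
  rw [Measure.volume_eq_prod] at hH₁ hH₂ ⊢
  rw [setIntegral_prod _ hH₂, setIntegral_congr_fun measurableSet_Ioi hangular, integral_zero,
    add_zero, setIntegral_prod _ hH₁]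
  refine integral_integral_swap ?_
  rw [Measure.prod_restrict]
  exact hH₁

section Weight

variable {R R' : ℝ}

theorem phiRR_eq_max (hR : 0 < R) (hRR' : R < R') (z : ℂ) :
    phiRR R R' z = max 0 (1 / Real.log (R' / R) * Real.log (R' / max ‖z‖ R)) := by
  have hL : 0 < Real.log (R' / R) := Real.log_pos ((one_lt_div hR).2 hRR')
  rw [phiRR]
  split_ifs with h₁ h₂
  · rw [max_eq_right h₁, one_div, inv_mul_cancel₀ hL.ne', max_eq_right zero_le_one]
  · have hz : 0 < ‖z‖ := hR.trans (not_le.1 h₁)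
    rw [max_eq_left (not_le.1 h₁).le, max_eq_right]
    exact mul_nonneg (one_div_nonneg.2 hL.le) (Real.log_nonneg ((one_le_div hz).2 h₂))
  · have hz : 0 < ‖z‖ := hR.trans (not_le.1 h₁)
    rw [max_eq_left (not_le.1 h₁).le, max_eq_left]
    exact mul_nonpos_of_nonneg_of_nonpos (one_div_nonneg.2 hL.le)
      (Real.log_nonpos (div_nonneg (hR.trans hRR').le hz.le) ((div_le_one hz).2 (not_le.1 h₂).le))

theorem continuous_phiRR (hR : 0 < R) (hRR' : R < R') : Continuous (phiRR R R') := by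
  have hpos : ∀ z : ℂ, 0 < max ‖z‖ R := fun z => lt_max_of_lt_right hR
  simp_rw [funext (phiRR_eq_max hR hRR')]
  exact continuous_const.max (continuous_const.mul
    ((continuous_const.div (continuous_norm.max continuous_const) fun z => (hpos z).ne').log
      fun z => (div_pos (hR.trans hRR') (hpos z)).ne'))

theorem phiRR_of_norm_le {z : ℂ} (h : ‖z‖ ≤ R) : phiRR R R' z = 1 := by
  simp [phiRR, h]

theorem phiRR_of_lt_norm (hRR' : R ≤ R') {z : ℂ} (h : R' < ‖z‖) : phiRR R R' z = 0 := by
  rw [phiRR, if_neg (by linarith), if_neg (by linarith)]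

theorem phiRR_of_norm_mem_Icc (hR : 0 < R) (hRR' : R < R') {z : ℂ} (h : ‖z‖ ∈ Icc R R') :
    phiRR R R' z = 1 / Real.log (R' / R) * Real.log (R' / ‖z‖) := by
  rw [phiRR_eq_max hR hRR', max_eq_left h.1, max_eq_right]
  exact mul_nonneg (one_div_nonneg.2 (Real.log_nonneg ((one_le_div hR).2 hRR'.le)))
    (Real.log_nonneg ((one_le_div (hR.trans_le h.1)).2 h.2))

theorem phiRR_ofReal_norm (z : ℂ) : phiRR R R' (‖z‖ : ℂ) = phiRR R R' z := by
  simp [phiRR]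

theorem integral_Ioi_phiRR_mul_deriv (hR : 0 < R) (hRR' : R < R') {u u' g g' : ℝ → ℝ}
    (hu : ∀ r ∈ Icc R R', HasDerivAt u (u' r) r)
    (hg : ∀ r ∈ Icc 0 R', HasDerivAt g (g' r) r) (hg' : IntervalIntegrable g' volume 0 R')
    (hg0 : g 0 = 0) (hgu : ∀ r ∈ Icc R R', g r = r * u' r) :
    ∫ r in Ioi (0 : ℝ), phiRR R R' r * g' r = 1 / Real.log (R' / R) * (u R' - u R) := by
  set A := 1 / Real.log (R' / R)
  have hR' : 0 < R' := hR.trans hRR'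
  have hIcc₁ : uIcc 0 R ⊆ Icc 0 R' := by
    rw [uIcc_of_le hR.le]; exact Icc_subset_Icc le_rfl hRR'.le
  have hIcc₂ : uIcc R R' ⊆ Icc 0 R' := by
    rw [uIcc_of_le hRR'.le]; exact Icc_subset_Icc hR.le le_rfl
  have hnorm : ∀ r : ℝ, 0 ≤ r → ‖(r : ℂ)‖ = r := fun r hr => by simp [abs_of_nonneg hr]
  have hinner : ∫ r in 0..R, phiRR R R' r * g' r = g R := by
    rw [intervalIntegral.integral_congr (g := g') fun r hr => ?_,
      intervalIntegral.integral_eq_sub_of_hasDerivAt (fun r hr => hg r (hIcc₁ hr))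
        (hg'.mono_set (hIcc₁.trans Icc_subset_uIcc)), hg0, sub_zero]
    rw [uIcc_of_le hR.le] at hr
    simp [phiRR_of_norm_le ((hnorm r hr.1).trans_le hr.2)]
  have hv : ∀ r ∈ uIcc R R',
      HasDerivAt (fun r => A * (Real.log R' - Real.log r)) (A * -r⁻¹) r := fun r hr => by
    rw [uIcc_of_le hRR'.le] at hr
    exact ((Real.hasDerivAt_log (hR.trans_le hr.1).ne').const_sub _).const_mul A
  have hv' : IntervalIntegrable (fun r => A * -r⁻¹) volume R R' := by
    refine ContinuousOn.intervalIntegrable fun r hr => ?_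
    rw [uIcc_of_le hRR'.le] at hr
    exact (continuousAt_const.mul
      (continuousAt_inv₀ (hR.trans_le hr.1).ne').neg).continuousWithinAt
  have hg_cont : ContinuousOn g (Icc 0 R') :=
    fun r hr => (hg r hr).continuousAt.continuousWithinAt
  have hu'_cont : ContinuousOn u' (Icc R R') := by
    refine ((hg_cont.mono (Icc_subset_Icc hR.le le_rfl)).div continuousOn_id
      fun r hr => (hR.trans_le hr.1).ne').congr fun r hr => ?_
    rw [Pi.div_apply, id, hgu r hr, mul_div_cancel_left₀ _ (hR.trans_le hr.1).ne']
  -- `-A / r` times `g = r u'` is `-A u'`.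
  have houter : ∫ r in R..R', phiRR R R' r * g' r = A * (u R' - u R) - g R := by
    rw [intervalIntegral.integral_congr (g := fun r => A * (Real.log R' - Real.log r) * g' r)
      fun r hr => ?_]
    · rw [intervalIntegral.integral_mul_deriv_eq_deriv_mul hv (fun r hr => hg r (hIcc₂ hr)) hv'
        (hg'.mono_set (hIcc₂.trans Icc_subset_uIcc))]
      rw [intervalIntegral.integral_congr (g := fun r => -(A * u' r)) fun r hr => ?_]
      · rw [intervalIntegral.integral_neg, intervalIntegral.integral_const_mul,
          intervalIntegral.integral_eq_sub_of_hasDerivAt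
            (fun r hr => hu r (by rwa [uIcc_of_le hRR'.le] at hr))
            (hu'_cont.intervalIntegrable_of_Icc hRR'.le),
          ← Real.log_div hR'.ne' hR.ne', sub_self, one_div_mul_cancel (Real.log_pos
            ((one_lt_div hR).2 hRR')).ne']
        ring
      · rw [uIcc_of_le hRR'.le] at hr
        rw [hgu r hr]
        field_simp [(hR.trans_le hr.1).ne']
    · rw [uIcc_of_le hRR'.le] at hr
      rw [phiRR_of_norm_mem_Icc hR hRR' (by rwa [hnorm r (hR.le.trans hr.1)]),
        hnorm r (hR.le.trans hr.1), Real.log_div hR'.ne' (hR.trans_le hr.1).ne']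
  have hφ : Continuous fun r : ℝ => phiRR R R' r :=
    (continuous_phiRR hR hRR').comp continuous_ofReal
  rw [setIntegral_eq_of_subset_of_forall_sdiff_eq_zero measurableSet_Ioi Ioc_subset_Ioi_self
      fun r hr => ?_, ← intervalIntegral.integral_of_le hR'.le,
    ← intervalIntegral.integral_add_adjacent_intervals
      ((hg'.mono_set (hIcc₁.trans Icc_subset_uIcc)).continuousOn_mul hφ.continuousOn)
      ((hg'.mono_set (hIcc₂.trans Icc_subset_uIcc)).continuousOn_mul hφ.continuousOn),
    hinner, houter]
  · ring
  · have hr' : R' < r := lt_of_not_ge fun h => hr.2 ⟨hr.1, h⟩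
    rw [phiRR_of_lt_norm hRR'.le (by rwa [hnorm r (hR'.trans hr').le]), zero_mul]

theorem integral_Ioi_phiRR_mul_radialTerm (hR : 0 < R) (hRR' : R < R') {f : ℂ → ℝ}
    (hf : ∀ z ∈ closedBall (0 : ℂ) R', ContDiffAt ℝ 2 f z) (θ : ℝ) :
    ∫ r in Ioi (0 : ℝ), phiRR R R' r * radialTerm f r θ =
      1 / Real.log (R' / R) * (f (circleMap 0 R' θ) - f (circleMap 0 R θ)) := by
  have hfr : ∀ r ∈ Icc 0 R', ContDiffAt ℝ 2 f (circleMap 0 r θ) := fun r hr =>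
    hf _ (by simpa [norm_circleMap_zero, abs_of_nonneg hr.1] using hr.2)
  refine integral_Ioi_phiRR_mul_deriv hR hRR' (u := fun r => f (circleMap 0 r θ))
    (u' := fun r => fderiv ℝ f (circleMap 0 r θ) (exp (θ * I)))
    (g := fun r => fderiv ℝ f (circleMap 0 r θ) (circleMap 0 r θ))
    (fun r hr => ?_) (fun r hr => hasDerivAt_radialTerm (hfr r hr)) ?_ (by simp [circleMap])
    (fun r _ => ?_)
  · have hr' : r ∈ Icc 0 R' := ⟨hR.le.trans hr.1, hr.2⟩
    exact ((hfr r hr').differentiableAt two_ne_zero).hasFDerivAt.comp_hasDerivAt r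
      (hasDerivAt_circleMap_radius 0 r θ)
  · refine ContinuousOn.intervalIntegrable fun r hr => ?_
    rw [uIcc_of_le (hR.trans hRR').le] at hr
    exact ((continuousAt_radialTerm_uncurry (p := (r, θ)) (hfr r hr)).comp
      (f := fun r : ℝ => (r, θ)) (by fun_prop)).continuousWithinAt
  · nth_rewrite 2 [circleMap_zero_eq_smul]
    rw [map_smul, smul_eq_mul]

end Weight

theorem green_riesz_for_phi (R R' : ℝ) (hR : 0 < R) (hRR' : R < R') (hR' : R' < 1)
    (A : ℝ) (hA : A = 1 / Real.log (R' / R))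
    (f : ℂ → ℝ) (U : Set ℂ) (hU : IsOpen U) (hUsub : Metric.closedBall (0 : ℂ) R' ⊆ U)
    (hf : ContDiffOn ℝ 2 f U) :
    ∫ z in Metric.ball (0 : ℂ) 1, phiRR R R' z * lap f z ∂volume =
      A * ((∫ θ in (0 : ℝ)..(2 * Real.pi), f (R' * Complex.exp (θ * Complex.I))) -
        ∫ θ in (0 : ℝ)..(2 * Real.pi), f (R * Complex.exp (θ * Complex.I))) := by
  subst hA
  have hf' : ∀ z ∈ closedBall (0 : ℂ) R', ContDiffAt ℝ 2 f z :=
    fun z hz => hf.contDiffAt (hU.mem_nhds (hUsub hz))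
  have hcirc : ∀ r ∈ Icc 0 R', Continuous fun θ => f (circleMap 0 r θ) := fun r hr =>
    continuous_iff_continuousAt.2 fun θ => (hf' _ (by
      simpa [norm_circleMap_zero, abs_of_nonneg hr.1] using hr.2)).continuousAt.comp
        (continuous_circleMap 0 r).continuousAt
  calc ∫ z in ball (0 : ℂ) 1, phiRR R R' z * lap f z
      = ∫ z, phiRR R R' (‖z‖ : ℂ) * lap f z := by
        simp_rw [phiRR_ofReal_norm]
        refine setIntegral_eq_integral_of_forall_compl_eq_zero fun z hz => ?_
        rw [phiRR_of_lt_norm hRR'.le (hR'.trans_le (by simpa using hz)), zero_mul]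
    _ = ∫ θ in Ioo (-π) π, ∫ r in Ioi (0 : ℝ), phiRR R R' r * radialTerm f r θ :=
        integral_radial_mul_lap_eq ((continuous_phiRR hR hRR').comp continuous_ofReal)
          (fun r hr => phiRR_of_lt_norm hRR'.le
            (by simpa [abs_of_pos (hR.trans (hRR'.trans hr))])) hf'
    _ = ∫ θ in Ioo (-π) π,
          1 / Real.log (R' / R) * (f (circleMap 0 R' θ) - f (circleMap 0 R θ)) :=
        setIntegral_congr_fun measurableSet_Ioo fun θ _ =>
          integral_Ioi_phiRR_mul_radialTerm hR hRR' hf' θ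
    _ = _ := by
        rw [Function.Periodic.setIntegral_Ioo_neg_pi_pi fun θ => by
            simp only [periodic_circleMap 0 _ θ],
          intervalIntegral.integral_const_mul, intervalIntegral.integral_sub
            ((hcirc R' ⟨(hR.trans hRR').le, le_rfl⟩).intervalIntegrable _ _)
            ((hcirc R ⟨hR.le, hRR'.le⟩).intervalIntegrable _ _)]
        simp only [circleMap_zero]
end

section
/- Let 0 < R < R' < 1, A = 1/log(R'/R), ρ' = (1/2)log((1+R')/(1−R')) − (1/2)log((1+R)/(1−R)), and let φ_{R,R'} : ℂ → ℝ equal 1 on {|z| ≤ R}, equal A·log(R'/|z|) on {R ≤ |z| ≤ R'}, and equal 0 on {|z| ≥ R'}. Then for every ε > 0 there exists δ > 0 such that whenever 1 − δ < R < R' < 1 and ρ' ≥ 1, one has | (∫_𝔻 φ_{R,R'} dv_P) / (4π A ρ') − 1 | < ε. -/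
open Complex Metric Set MeasureTheory

open scoped Interval

/-!
In polar coordinates the Poincaré area of `φ_{R,R'}` is `2πA (log(1 - R²) - log(1 - R'²))`:
on the inner disk `4r/(1-r²)²` has primitive `2/(1-r²)`, and on the annulus
`r log(R'/r) · 4/(1-r²)²` has primitive `log(R'/r) (2/(1-r²) - 2) - log(1-r²)`.
Since `(1/2) log((1+r)/(1-r)) = log(1+r) - (1/2) log(1-r²)`, this is `4πA(ρ' - N)` with
`N = log(1+R') - log(1+R)`, so the relative error is `N/ρ' ≤ N ≤ R' - R < 1 - R` as soon as `ρ' ≥ 1`.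
-/

theorem integral_comp_norm_complex (f : ℝ → ℝ) :
    ∫ z : ℂ, f ‖z‖ = 2 * Real.pi * ∫ r in Ioi (0 : ℝ), r * f r := by
  rw [integral_fun_norm_addHaar volume f, measureReal_def, Complex.volume_ball]
  simp [mul_assoc]

lemma one_sub_sq_pos_of_mem_Ioo {y : ℝ} (hy : y ∈ Ioo (-1 : ℝ) 1) : 0 < 1 - y ^ 2 := by
  nlinarith [hy.1, hy.2]

lemma hasDerivAt_two_div_one_sub_sq {y : ℝ} (hy : 1 - y ^ 2 ≠ 0) :
    HasDerivAt (fun y => 2 / (1 - y ^ 2)) (y * (4 / (1 - y ^ 2) ^ 2)) y :=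
  ((hasDerivAt_const y (2 : ℝ)).fun_div ((hasDerivAt_pow 2 y).const_sub 1) hy).congr_deriv
    (by simp only [Nat.cast_ofNat, Nat.add_one_sub_one, pow_one]; ring)

lemma hasDerivAt_log_div {c y : ℝ} (hc : c ≠ 0) (hy : y ≠ 0) :
    HasDerivAt (fun y => Real.log (c / y)) (-y⁻¹) y :=
  (((hasDerivAt_const y c).fun_div (hasDerivAt_id' y) hy).log (div_ne_zero hc hy)).congr_deriv
    (by field_simp; ring)

lemma hasDerivAt_log_div_mul_two_div_one_sub_sq {c y : ℝ} (hc : c ≠ 0) (hy₀ : y ≠ 0)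
    (hy : 1 - y ^ 2 ≠ 0) :
    HasDerivAt (fun y => Real.log (c / y) * (2 / (1 - y ^ 2) - 2) - Real.log (1 - y ^ 2))
      (y * (Real.log (c / y) * (4 / (1 - y ^ 2) ^ 2))) y :=
  (((hasDerivAt_log_div hc hy₀).mul ((hasDerivAt_two_div_one_sub_sq hy).sub_const 2)).sub
    (((hasDerivAt_pow 2 y).const_sub 1).log hy)).congr_deriv <| by
      simp only [Nat.cast_ofNat, Nat.add_one_sub_one, pow_one]
      field_simp
      ring

lemma continuousOn_poincareDensity :
    ContinuousOn (fun y : ℝ => 4 / (1 - y ^ 2) ^ 2) (Ioo (-1) 1) :=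
  continuousOn_const.div (by fun_prop) fun _ hy => (pow_pos (one_sub_sq_pos_of_mem_Ioo hy) 2).ne'

lemma intervalIntegrable_mul_poincareDensity {a b : ℝ} (ha : a ∈ Ioo (-1 : ℝ) 1)
    (hb : b ∈ Ioo (-1 : ℝ) 1) :
    IntervalIntegrable (fun y => y * (4 / (1 - y ^ 2) ^ 2)) volume a b :=
  (continuousOn_id.mul continuousOn_poincareDensity).mono (ordConnected_Ioo.uIcc_subset ha hb)
    |>.intervalIntegrable

lemma intervalIntegrable_mul_log_div_mul_poincareDensity {a b : ℝ}
    (ha : a ∈ Ioo (0 : ℝ) 1) (hb : b ∈ Ioo (0 : ℝ) 1) :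
    IntervalIntegrable (fun y => y * (Real.log (b / y) * (4 / (1 - y ^ 2) ^ 2))) volume a b := by
  have hlog : ContinuousOn (fun y : ℝ => Real.log (b / y)) (Ioo 0 1) :=
    (continuousOn_const.div continuousOn_id fun _ hy => hy.1.ne').log
      fun _ hy => div_ne_zero hb.1.ne' hy.1.ne'
  have hdens := continuousOn_poincareDensity.mono (Ioo_subset_Ioo_left neg_one_lt_zero.le)
  exact (continuousOn_id.mul (hlog.mul hdens)).mono (ordConnected_Ioo.uIcc_subset ha hb)
    |>.intervalIntegrable

lemma integral_mul_poincareDensity {a b : ℝ} (ha : a ∈ Ioo (-1 : ℝ) 1) (hb : b ∈ Ioo (-1 : ℝ) 1) :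
    ∫ y in a..b, y * (4 / (1 - y ^ 2) ^ 2) = 2 / (1 - b ^ 2) - 2 / (1 - a ^ 2) :=
  intervalIntegral.integral_eq_sub_of_hasDerivAt
    (fun _ hy => hasDerivAt_two_div_one_sub_sq
      (one_sub_sq_pos_of_mem_Ioo (ordConnected_Ioo.uIcc_subset ha hb hy)).ne')
    (intervalIntegrable_mul_poincareDensity ha hb)

lemma integral_mul_log_div_mul_poincareDensity {a b : ℝ}
    (ha : a ∈ Ioo (0 : ℝ) 1) (hb : b ∈ Ioo (0 : ℝ) 1) :
    ∫ y in a..b, y * (Real.log (b / y) * (4 / (1 - y ^ 2) ^ 2)) =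
      Real.log (1 - a ^ 2) - Real.log (1 - b ^ 2) - Real.log (b / a) * (2 / (1 - a ^ 2) - 2) := by
  have hderiv : ∀ y ∈ uIcc a b, HasDerivAt
      (fun y => Real.log (b / y) * (2 / (1 - y ^ 2) - 2) - Real.log (1 - y ^ 2))
      (y * (Real.log (b / y) * (4 / (1 - y ^ 2) ^ 2))) y := fun y hy => by
    have hy' := ordConnected_Ioo.uIcc_subset ha hb hy
    exact hasDerivAt_log_div_mul_two_div_one_sub_sq hb.1.ne' hy'.1.ne'
      (one_sub_sq_pos_of_mem_Ioo ⟨by linarith [hy'.1], hy'.2⟩).ne'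
  rw [intervalIntegral.integral_eq_sub_of_hasDerivAt hderiv
    (intervalIntegrable_mul_log_div_mul_poincareDensity ha hb), div_self hb.1.ne', Real.log_one]
  ring

-- `phiRR R R' z` unfolds to `phiRadial R R' ‖z‖`.
noncomputable def phiRadial (R R' r : ℝ) : ℝ :=
  if r ≤ R then 1 else if r ≤ R' then (1 / Real.log (R' / R)) * Real.log (R' / r) else 0

lemma integral_Ioi_mul_phiRadial_mul_poincareDensity {R R' : ℝ} (hR : 0 < R) (hRR' : R < R')
    (hR' : R' < 1) :
    ∫ r in Ioi (0 : ℝ), r * (phiRadial R R' r * (4 / (1 - r ^ 2) ^ 2)) =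
      1 / Real.log (R' / R) * (Real.log (1 - R ^ 2) - Real.log (1 - R' ^ 2)) := by
  set A := 1 / Real.log (R' / R)
  have hA : A * Real.log (R' / R) = 1 :=
    one_div_mul_cancel (Real.log_pos ((one_lt_div hR).2 hRR')).ne'
  set f := fun r => r * (phiRadial R R' r * (4 / (1 - r ^ 2) ^ 2))
  have hR₁ : R ∈ Ioo (0 : ℝ) 1 := ⟨hR, hRR'.trans hR'⟩
  have hR'₁ : R' ∈ Ioo (0 : ℝ) 1 := ⟨hR.trans hRR', hR'⟩
  have hf_inner : EqOn f (fun r => r * (4 / (1 - r ^ 2) ^ 2)) (Ι 0 R) := fun r hr => by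
    rw [uIoc_of_le hR.le] at hr
    simp [f, phiRadial, hr.2]
  have hf_outer : EqOn f (fun r => A * (r * (Real.log (R' / r) * (4 / (1 - r ^ 2) ^ 2))))
      (Ι R R') := fun r hr => by
    rw [uIoc_of_le hRR'.le] at hr
    simp only [f, phiRadial, if_neg (not_le.2 hr.1), if_pos hr.2]
    ring
  have hf_int_inner : IntervalIntegrable f volume 0 R :=
    (intervalIntegrable_mul_poincareDensity ⟨neg_one_lt_zero, zero_lt_one⟩
      ⟨by linarith, hR₁.2⟩).congr hf_inner.symm
  have hf_int_outer : IntervalIntegrable f volume R R' :=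
    ((intervalIntegrable_mul_log_div_mul_poincareDensity hR₁ hR'₁).const_mul A).congr
      hf_outer.symm
  calc ∫ r in Ioi 0, f r = ∫ r in Ioc 0 R', f r := by
        refine setIntegral_eq_of_subset_of_forall_sdiff_eq_zero measurableSet_Ioi
          Ioc_subset_Ioi_self fun r hr => ?_
        have hr' : R' < r := by
          by_contra! h
          exact hr.2 ⟨hr.1, h⟩
        simp [f, phiRadial, not_le.2 hr', not_le.2 (hRR'.trans hr')]
    _ = (∫ r in (0)..R, f r) + ∫ r in R..R', f r := by
        rw [← intervalIntegral.integral_of_le (hR.trans hRR').le,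
          intervalIntegral.integral_add_adjacent_intervals hf_int_inner hf_int_outer]
    _ = (2 / (1 - R ^ 2) - 2 / (1 - 0 ^ 2)) + A * (Real.log (1 - R ^ 2) - Real.log (1 - R' ^ 2)
          - Real.log (R' / R) * (2 / (1 - R ^ 2) - 2)) := by
        rw [intervalIntegral.integral_congr_ae (ae_of_all _ fun r hr => hf_inner hr),
          intervalIntegral.integral_congr_ae (ae_of_all _ fun r hr => hf_outer hr),
          intervalIntegral.integral_const_mul, integral_mul_poincareDensity
            ⟨neg_one_lt_zero, zero_lt_one⟩ ⟨by linarith, hR₁.2⟩,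
          integral_mul_log_div_mul_poincareDensity hR₁ hR'₁]
    _ = A * (Real.log (1 - R ^ 2) - Real.log (1 - R' ^ 2)) := by
        linear_combination (2 - 2 / (1 - R ^ 2)) * hA

lemma setIntegral_ball_phiRR_mul_poincareDensity {R R' : ℝ} (hR : 0 < R) (hRR' : R < R')
    (hR' : R' < 1) :
    ∫ z in ball (0 : ℂ) 1, phiRR R R' z * (4 / (1 - ‖z‖ ^ 2) ^ 2) =
      2 * Real.pi * (1 / Real.log (R' / R) * (Real.log (1 - R ^ 2) - Real.log (1 - R' ^ 2))) := by
  rw [setIntegral_eq_integral_of_forall_compl_eq_zero fun z hz => ?_]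
  · rw [← integral_Ioi_mul_phiRadial_mul_poincareDensity hR hRR' hR']
    exact integral_comp_norm_complex fun r => phiRadial R R' r * (4 / (1 - r ^ 2) ^ 2)
  · have hz' : R' < ‖z‖ := hR'.trans_le (by simpa using hz)
    simp [phiRR, not_le.2 hz', not_le.2 (hRR'.trans hz')]

lemma half_log_one_add_div_one_sub {r : ℝ} (hr : r ∈ Ioo (-1 : ℝ) 1) :
    1 / 2 * Real.log ((1 + r) / (1 - r)) = Real.log (1 + r) - 1 / 2 * Real.log (1 - r ^ 2) := by
  have h₁ : 0 < 1 + r := by linarith [hr.1]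
  have h₂ : 0 < 1 - r := by linarith [hr.2]
  rw [Real.log_div h₁.ne' h₂.ne', show 1 - r ^ 2 = (1 - r) * (1 + r) by ring,
    Real.log_mul h₂.ne' h₁.ne']
  ring

lemma log_one_add_sub_log_one_add_le {a b : ℝ} (ha : 0 ≤ a) (hab : a ≤ b) :
    Real.log (1 + b) - Real.log (1 + a) ≤ b - a := by
  have h₁ : 0 < 1 + a := by linarith
  have h₂ : 0 < 1 + b := by linarith
  rw [← Real.log_div h₂.ne' h₁.ne']
  calc Real.log ((1 + b) / (1 + a)) ≤ (1 + b) / (1 + a) - 1 :=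
        Real.log_le_sub_one_of_pos (div_pos h₂ h₁)
    _ = (b - a) / (1 + a) := by field_simp; ring
    _ ≤ b - a := div_le_self (by linarith) (by linarith)

theorem poincare_integral_phi_asymptotic :
    ∀ ε > (0 : ℝ), ∃ δ > (0 : ℝ), ∀ R R' : ℝ, 1 - δ < R → R < R' → R' < 1 → 0 < R →
      (1 / 2) * Real.log ((1 + R') / (1 - R')) -
        (1 / 2) * Real.log ((1 + R) / (1 - R)) ≥ 1 →
      |(∫ z in Metric.ball (0 : ℂ) 1,
            phiRR R R' z * (4 / (1 - ‖z‖ ^ 2) ^ 2) ∂volume) /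
          (4 * Real.pi * (1 / Real.log (R' / R)) *
            ((1 / 2) * Real.log ((1 + R') / (1 - R')) -
              (1 / 2) * Real.log ((1 + R) / (1 - R)))) - 1| < ε := by
  intro ε hε
  refine ⟨ε, hε, fun R R' hRδ hRR' hR' hR hρ => ?_⟩
  set ρ := 1 / 2 * Real.log ((1 + R') / (1 - R')) - 1 / 2 * Real.log ((1 + R) / (1 - R))
    with hρ_def
  set N := Real.log (1 + R') - Real.log (1 + R)
  have hlog : 0 < Real.log (R' / R) := Real.log_pos ((one_lt_div hR).2 hRR')
  have hρ_eq : Real.log (1 - R ^ 2) - Real.log (1 - R' ^ 2) = 2 * (ρ - N) := by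
    rw [hρ_def, half_log_one_add_div_one_sub ⟨by linarith, hR'⟩,
      half_log_one_add_div_one_sub ⟨by linarith, hRR'.trans hR'⟩]
    ring
  have hρ_pos : 0 < ρ := by linarith
  have hN : 0 ≤ N := sub_nonneg.2 (Real.log_le_log (by linarith) (by linarith))
  rw [setIntegral_ball_phiRR_mul_poincareDensity hR hRR' hR', hρ_eq,
    show 2 * Real.pi * (1 / Real.log (R' / R) * (2 * (ρ - N))) /
      (4 * Real.pi * (1 / Real.log (R' / R)) * ρ) - 1 = -(N / ρ) by
        field_simp
        ring,
    abs_neg, abs_of_nonneg (div_nonneg hN hρ_pos.le)]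
  calc N / ρ ≤ N := div_le_self hN hρ
    _ ≤ R' - R := log_one_add_sub_log_one_add_le hR.le hRR'.le
    _ < ε := by linarith
end

section
/- Let 0 < R < R' < 1, A = 1/log(R'/R), ρ' = (1/2)log((1+R')/(1−R')) − (1/2)log((1+R)/(1−R)), and let ψ_{R,R'} : ℂ → ℝ equal 1 on {|z| ≤ R}, equal (R' − |z|)/(R' − R) on {R ≤ |z| ≤ R'}, and equal 0 on {|z| ≥ R'}. Then for every ε > 0 there exists δ > 0 such that whenever 1 − δ < R < R' < 1 and ρ' ≥ 1, one has | (∫_𝔻 ψ_{R,R'} dv_P) / (4π A ρ') − 1 | < ε. -/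
open Complex Metric Set MeasureTheory

/-- The function `ψ_{R,R'}`: equal to `1` on `{|z| ≤ R}`, to `(R' - |z|)/(R' - R)` on
`{R ≤ |z| ≤ R'}`, and to `0` on `{|z| ≥ R'}`. -/
noncomputable def psiRR (R R' : ℝ) (z : ℂ) : ℝ :=
  if ‖z‖ ≤ R then 1
  else if ‖z‖ ≤ R' then (R' - ‖z‖) / (R' - R)
  else 0

/-!
In polar coordinates `v_P` has radial density `2π r · 4/(1-r²)² = 2π (d/dr) 2/(1-r²)`, and `ψ`
is radial, linear in `|z|` on `R ≤ |z| ≤ R'`. Integrating by parts on `[R, R']`, where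
`L r = log ((1+r)/(1-r))` is a primitive of `2/(1-r²)`, gives
`∫_𝔻 ψ dv_P = 2π ((L R' - L R)/(R' - R) - 2) = 2π (2ρ'/(R' - R) - 2)`.
Dividing by `4πAρ'` leaves `c/(R' - R) - c/ρ'` with `c = log (R'/R)`, and the elementary bounds
`R' - R ≤ c ≤ (R' - R)/R` together with `ρ' ≥ 1` put this within `(1 - R)/R` of `1`, which is
less than `ε` once `R > 1/(1 + ε)`.
-/

namespace PoincareDisk

open intervalIntegral

noncomputable def poincareDensity (r : ℝ) : ℝ := 4 / (1 - r ^ 2) ^ 2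

lemma one_sub_sq_pos {y : ℝ} (hy : y ∈ Ioo (-1) 1) : 0 < 1 - y ^ 2 := by
  nlinarith [hy.1, hy.2]

lemma hasDerivAt_two_div_one_sub_sq {y : ℝ} (hy : 1 - y ^ 2 ≠ 0) :
    HasDerivAt (fun y : ℝ => 2 / (1 - y ^ 2)) (y * poincareDensity y) y := by
  refine ((((hasDerivAt_pow 2 y).const_sub 1).inv hy).const_mul 2).congr_deriv ?_
  rw [poincareDensity]
  field_simp
  ring

lemma hasDerivAt_log_one_add_div_one_sub {y : ℝ} (hy : y ∈ Ioo (-1) 1) :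
    HasDerivAt (fun y : ℝ => Real.log ((1 + y) / (1 - y))) (2 / (1 - y ^ 2)) y := by
  have h1 : 0 < 1 + y := by linarith [hy.1]
  have h2 : 0 < 1 - y := by linarith [hy.2]
  have h3 := (one_sub_sq_pos hy).ne'
  have hq : HasDerivAt (fun y : ℝ => (1 + y) / (1 - y)) (2 / (1 - y) ^ 2) y := by
    refine (((hasDerivAt_id' y).const_add 1).div ((hasDerivAt_id' y).const_sub 1)
      h2.ne').congr_deriv ?_
    ring
  refine (hq.log (div_pos h1 h2).ne').congr_deriv ?_
  field_simp
  ring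

lemma continuousOn_poincareDensity : ContinuousOn poincareDensity (Ioo (-1) 1) :=
  ContinuousOn.div (by fun_prop) (by fun_prop) fun _ hy => pow_ne_zero 2 (one_sub_sq_pos hy).ne'

lemma continuousOn_two_div_one_sub_sq :
    ContinuousOn (fun y : ℝ => 2 / (1 - y ^ 2)) (Ioo (-1) 1) :=
  ContinuousOn.div (by fun_prop) (by fun_prop) fun _ hy => (one_sub_sq_pos hy).ne'

variable {a b : ℝ}

lemma intervalIntegrable_mul_poincareDensity (ha : a ∈ Ioo (-1) 1) (hb : b ∈ Ioo (-1) 1) :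
    IntervalIntegrable (fun y => y * poincareDensity y) volume a b :=
  ((continuousOn_id.mul continuousOn_poincareDensity).mono
    (ordConnected_Ioo.uIcc_subset ha hb)).intervalIntegrable

lemma integral_mul_poincareDensity (ha : a ∈ Ioo (-1) 1) (hb : b ∈ Ioo (-1) 1) :
    ∫ y in a..b, y * poincareDensity y = 2 / (1 - b ^ 2) - 2 / (1 - a ^ 2) :=
  integral_eq_sub_of_hasDerivAt
    (fun _ hy => hasDerivAt_two_div_one_sub_sq
      (one_sub_sq_pos (ordConnected_Ioo.uIcc_subset ha hb hy)).ne')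
    (intervalIntegrable_mul_poincareDensity ha hb)

lemma integral_sub_mul_mul_poincareDensity (ha : a ∈ Ioo (-1) 1) (hb : b ∈ Ioo (-1) 1) :
    ∫ y in a..b, (b - y) * (y * poincareDensity y) =
      Real.log ((1 + b) / (1 - b)) - Real.log ((1 + a) / (1 - a))
        - (b - a) * (2 / (1 - a ^ 2)) := by
  have hab := ordConnected_Ioo.uIcc_subset ha hb
  have hu : ∀ y ∈ uIcc a b, HasDerivAt (fun y : ℝ => b - y) (-1) y :=
    fun y _ => by simpa using (hasDerivAt_id y).const_sub b
  have hv : ∀ y ∈ uIcc a b, HasDerivAt (fun y : ℝ => 2 / (1 - y ^ 2)) _ y :=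
    fun y hy => hasDerivAt_two_div_one_sub_sq (one_sub_sq_pos (hab hy)).ne'
  have hL : ∫ y in a..b, 2 / (1 - y ^ 2) =
      Real.log ((1 + b) / (1 - b)) - Real.log ((1 + a) / (1 - a)) :=
    integral_eq_sub_of_hasDerivAt (fun y hy => hasDerivAt_log_one_add_div_one_sub (hab hy))
      (continuousOn_two_div_one_sub_sq.mono hab).intervalIntegrable
  rw [integral_mul_deriv_eq_deriv_mul hu hv intervalIntegrable_const
    (intervalIntegrable_mul_poincareDensity ha hb), intervalIntegral.integral_const_mul, hL]
  ring

lemma integral_comp_norm_complex {F : Type*} [NormedAddCommGroup F] [NormedSpace ℝ F]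
    (f : ℝ → F) : ∫ z : ℂ, f ‖z‖ = (2 * Real.pi) • ∫ r in Ioi 0, r • f r := by
  have h := integral_fun_norm_addHaar (volume : Measure ℂ) f
  simp only [Complex.finrank_real_complex, Measure.real, Complex.volume_ball] at h
  rw [h, mul_smul, ← Nat.cast_smul_eq_nsmul ℝ]
  simp

noncomputable def psiProfile (R R' r : ℝ) : ℝ :=
  if r ≤ R then 1 else if r ≤ R' then (R' - r) / (R' - R) else 0

variable {R R' r : ℝ}

lemma psiRR_eq_psiProfile (z : ℂ) : psiRR R R' z = psiProfile R R' ‖z‖ := rfl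

lemma psiProfile_of_le (h : r ≤ R) : psiProfile R R' r = 1 := if_pos h

lemma psiProfile_of_mem_Icc (hRR' : R < R') (h : r ∈ Icc R R') :
    psiProfile R R' r = (R' - r) / (R' - R) := by
  rcases h.1.eq_or_lt with rfl | hr
  · rw [psiProfile_of_le le_rfl, div_self (sub_pos.2 hRR').ne']
  · rw [psiProfile, if_neg hr.not_ge, if_pos h.2]

lemma psiProfile_of_lt (hRR' : R ≤ R') (h : R' < r) : psiProfile R R' r = 0 := by
  rw [psiProfile, if_neg (hRR'.trans_lt h).not_ge, if_neg h.not_ge]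

lemma integral_psiRR_mul_poincareDensity_eq_intervalIntegral (hRR' : R ≤ R') (hR'0 : 0 ≤ R')
    (hR' : R' < 1) :
    ∫ z in ball (0 : ℂ) 1, psiRR R R' z * poincareDensity ‖z‖ =
      2 * Real.pi * ∫ r in 0..R', r * (psiProfile R R' r * poincareDensity r) := by
  have hball : ∫ z in ball (0 : ℂ) 1, psiRR R R' z * poincareDensity ‖z‖ =
      ∫ z : ℂ, psiProfile R R' ‖z‖ * poincareDensity ‖z‖ := by
    refine setIntegral_eq_integral_of_forall_compl_eq_zero fun z hz => ?_
    have hz1 : 1 ≤ ‖z‖ := by simpa using hz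
    rw [psiRR_eq_psiProfile, psiProfile_of_lt hRR' (by linarith), zero_mul]
  rw [hball, integral_comp_norm_complex (fun r => psiProfile R R' r * poincareDensity r),
    integral_of_le hR'0, smul_eq_mul]
  congr 1
  refine setIntegral_eq_of_subset_of_forall_sdiff_eq_zero measurableSet_Ioi Ioc_subset_Ioi_self
    fun r hr => ?_
  have hr' : R' < r := lt_of_not_ge fun h => hr.2 ⟨hr.1, h⟩
  simp only [psiProfile_of_lt hRR' hr', zero_mul, smul_zero]

lemma integral_mul_psiProfile_mul_poincareDensity (h0 : 0 ≤ R) (hRR' : R < R') (hR' : R' < 1) :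
    ∫ r in 0..R', r * (psiProfile R R' r * poincareDensity r) =
      (Real.log ((1 + R') / (1 - R')) - Real.log ((1 + R) / (1 - R))) / (R' - R) - 2 := by
  set g : ℝ → ℝ := fun r => r * (psiProfile R R' r * poincareDensity r) with hg
  have h0_mem : (0 : ℝ) ∈ Ioo (-1) 1 := by norm_num
  have hR_mem : R ∈ Ioo (-1) 1 := ⟨by linarith, by linarith⟩
  have hR'_mem : R' ∈ Ioo (-1) 1 := ⟨by linarith, hR'⟩
  have hinner : EqOn g (fun y => y * poincareDensity y) (uIcc 0 R) := fun y hy => by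
    rw [uIcc_of_le h0] at hy
    simp only [hg, psiProfile_of_le hy.2, one_mul]
  have houter : EqOn g (fun y => (R' - R)⁻¹ * ((R' - y) * (y * poincareDensity y)))
      (uIcc R R') := fun y hy => by
    rw [uIcc_of_le hRR'.le] at hy
    simp only [hg, psiProfile_of_mem_Icc hRR' hy]
    ring
  have hint_inner : IntervalIntegrable g volume 0 R :=
    (intervalIntegrable_mul_poincareDensity h0_mem hR_mem).congr
      (hinner.symm.mono uIoc_subset_uIcc)
  have hint_outer : IntervalIntegrable g volume R R' :=
    (((intervalIntegrable_mul_poincareDensity hR_mem hR'_mem).continuousOn_mul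
      (by fun_prop : ContinuousOn (fun y => R' - y) _)).const_mul _).congr
      (houter.symm.mono uIoc_subset_uIcc)
  rw [← integral_add_adjacent_intervals hint_inner hint_outer, integral_congr hinner,
    integral_congr houter, intervalIntegral.integral_const_mul,
    integral_mul_poincareDensity h0_mem hR_mem,
    integral_sub_mul_mul_poincareDensity hR_mem hR'_mem]
  have hRR'_ne : R' - R ≠ 0 := (sub_pos.2 hRR').ne'
  have hR2_ne : 1 - R ^ 2 ≠ 0 := (one_sub_sq_pos hR_mem).ne'
  field_simp
  ring

lemma integral_psiRR_mul_poincareDensity (h0 : 0 ≤ R) (hRR' : R < R') (hR' : R' < 1) :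
    ∫ z in ball (0 : ℂ) 1, psiRR R R' z * (4 / (1 - ‖z‖ ^ 2) ^ 2) =
      2 * Real.pi * ((Real.log ((1 + R') / (1 - R')) - Real.log ((1 + R) / (1 - R))) / (R' - R)
        - 2) := by
  rw [← integral_mul_psiProfile_mul_poincareDensity h0 hRR' hR']
  exact integral_psiRR_mul_poincareDensity_eq_intervalIntegral hRR'.le (h0.trans hRR'.le) hR'

lemma log_div_le_sub_div {a b : ℝ} (ha : 0 < a) (hb : 0 < b) :
    Real.log (b / a) ≤ (b - a) / a := by
  have h := Real.log_le_sub_one_of_pos (div_pos hb ha)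
  rwa [div_sub_one ha.ne'] at h

lemma sub_le_log_div {a b : ℝ} (ha : 0 < a) (hab : a ≤ b) (hb : b ≤ 1) :
    b - a ≤ Real.log (b / a) := by
  have hb0 : 0 < b := ha.trans_le hab
  have h := Real.one_sub_inv_le_log_of_pos (div_pos hb0 ha)
  rw [inv_div] at h
  calc b - a = b * (1 - a / b) := by field_simp
    _ ≤ 1 * (1 - a / b) := by
      gcongr
      rwa [sub_nonneg, div_le_one hb0]
    _ ≤ Real.log (b / a) := by rwa [one_mul]

lemma abs_log_div_div_sub_log_div_div_sub_one_le {ρ : ℝ} (h0 : 0 < R) (hRR' : R < R')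
    (hR' : R' ≤ 1) (hρ : 1 ≤ ρ) :
    |Real.log (R' / R) / (R' - R) - Real.log (R' / R) / ρ - 1| ≤ (1 - R) / R := by
  set c := Real.log (R' / R)
  have hd : 0 < R' - R := sub_pos.2 hRR'
  have hc_lower : R' - R ≤ c := sub_le_log_div h0 hRR'.le hR'
  have hc_upper : c ≤ (R' - R) / R := log_div_le_sub_div h0 (h0.trans hRR')
  have hc : 0 ≤ c := hd.le.trans hc_lower
  have h1 : 1 ≤ c / (R' - R) := (one_le_div hd).2 hc_lower
  have h2 : c / (R' - R) ≤ 1 / R := by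
    rw [div_le_div_iff₀ hd h0]
    calc c * R ≤ (R' - R) / R * R := by gcongr
      _ = 1 * (R' - R) := by field_simp
  have h3 : 0 ≤ c / ρ := div_nonneg hc (zero_le_one.trans hρ)
  have h4 : c / ρ ≤ (1 - R) / R :=
    calc c / ρ ≤ c := div_le_self hc hρ
      _ ≤ (R' - R) / R := hc_upper
      _ ≤ (1 - R) / R := by gcongr
  have h5 : 1 / R - 1 = (1 - R) / R := by field_simp
  rw [abs_le]
  constructor <;> linarith

end PoincareDisk

open PoincareDisk in
theorem poincare_integral_psi_asymptotic :
    ∀ ε > (0 : ℝ), ∃ δ > (0 : ℝ), ∀ R R' : ℝ, 1 - δ < R → R < R' → R' < 1 → 0 < R →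
      (1 / 2) * Real.log ((1 + R') / (1 - R')) -
        (1 / 2) * Real.log ((1 + R) / (1 - R)) ≥ 1 →
      |(∫ z in Metric.ball (0 : ℂ) 1,
            psiRR R R' z * (4 / (1 - ‖z‖ ^ 2) ^ 2) ∂volume) /
          (4 * Real.pi * (1 / Real.log (R' / R)) *
            ((1 / 2) * Real.log ((1 + R') / (1 - R')) -
              (1 / 2) * Real.log ((1 + R) / (1 - R)))) - 1| < ε := by
  intro ε hε
  refine ⟨ε / (1 + ε), by positivity, fun R R' hδ hRR' hR' hR hρ => ?_⟩
  set ρ := (1 / 2) * Real.log ((1 + R') / (1 - R')) - (1 / 2) * Real.log ((1 + R) / (1 - R))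
  have hL : Real.log ((1 + R') / (1 - R')) - Real.log ((1 + R) / (1 - R)) = 2 * ρ := by ring
  have hc : 0 < Real.log (R' / R) := Real.log_pos ((one_lt_div hR).2 hRR')
  have hratio : (∫ z in ball (0 : ℂ) 1, psiRR R R' z * (4 / (1 - ‖z‖ ^ 2) ^ 2)) /
      (4 * Real.pi * (1 / Real.log (R' / R)) * ρ) =
        Real.log (R' / R) / (R' - R) - Real.log (R' / R) / ρ := by
    rw [integral_psiRR_mul_poincareDensity hR.le hRR' hR', hL]
    have hd : R' - R ≠ 0 := (sub_pos.2 hRR').ne'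
    have hρ0 : ρ ≠ 0 := by linarith
    field_simp
    ring
  have hR_large : 1 < (1 + ε) * R := by
    rwa [show 1 - ε / (1 + ε) = 1 / (1 + ε) by field_simp; ring, div_lt_iff₀' (by positivity)]
      at hδ
  rw [hratio]
  refine (abs_log_div_div_sub_log_div_div_sub_one_le hR hRR' hR'.le hρ).trans_lt ?_
  rw [div_lt_iff₀ hR]
  linarith
end

section
/- Let 0 < R < R' < 1, A = 1/log(R'/R), ρ' = (1/2)log((1+R')/(1−R')) − (1/2)log((1+R)/(1−R)), and let φ_{R,R'} : ℂ → ℝ equal 1 on {|z| ≤ R}, equal A·log(R'/|z|) on {R ≤ |z| ≤ R'}, and equal 0 on {|z| ≥ R'}. Then for every ε > 0 there exist δ > 0 and c > 0 such that whenever 1 − δ < R < R' < 1 and ρ' ≥ c, the following holds for every bounded C² function f : 𝔻 → ℝ with sup norm ‖f‖_∞ > 0: | ∫_𝔻 φ_{R,R'} Δf dLeb | / ( ‖f‖_∞ · ∫_𝔻 φ_{R,R'} dv_P ) < ε. (Here Δf dLeb plays the role of the hyperbolic Laplacian integrated against v_P, since Δ_P f · v_P = Δf · dLeb.) -/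
open Complex Metric Set MeasureTheory

/-- The sup norm `‖f‖_∞ = sup_{z ∈ 𝔻} |f z|` of a function on the unit disk. -/
noncomputable def supNormDisk (f : ℂ → ℝ) : ℝ :=
  sSup ((fun z => |f z|) '' Metric.ball (0 : ℂ) 1)

set_option linter.unusedSectionVars false

namespace LapAux

noncomputable def ee (θ : ℝ) : ℂ := (Real.cos θ : ℂ) + (Real.sin θ : ℂ) * Complex.I

noncomputable def d1 (g : ℂ → ℝ) (z : ℂ) : ℝ := fderiv ℝ g z 1
noncomputable def dI (g : ℂ → ℝ) (z : ℂ) : ℝ := fderiv ℝ g z Complex.I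

noncomputable def Pt (p : ℝ × ℝ) : ℂ := (p.1 : ℂ) * ee p.2

lemma lap_eq (f : ℂ → ℝ) (z : ℂ) : lap f z = d1 (d1 f) z + dI (dI f) z := rfl

lemma ee_eq_exp (θ : ℝ) : ee θ = Complex.exp (θ * Complex.I) := by
  rw [Complex.exp_mul_I, ee, Complex.ofReal_cos, Complex.ofReal_sin]

lemma abs_ee (θ : ℝ) : ‖ee θ‖ = 1 := by
  rw [ee_eq_exp]; exact Complex.norm_exp_ofReal_mul_I θ

lemma Pt_eq (p : ℝ × ℝ) : Complex.polarCoord.symm p = Pt p := by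
  rw [Complex.polarCoord_symm_apply]; rfl

lemma abs_Pt (p : ℝ × ℝ) : ‖Pt p‖ = |p.1| := by
  rw [Pt, norm_mul, abs_ee, Complex.norm_real, Real.norm_eq_abs, mul_one]

lemma continuous_Pt : Continuous Pt := by
  unfold Pt ee; fun_prop

lemma clm_expand (L : ℂ →L[ℝ] ℝ) (a b : ℝ) :
    L ((a : ℂ) + (b : ℂ) * Complex.I) = a * L 1 + b * L Complex.I := by
  have h : ((a : ℂ) + (b : ℂ) * Complex.I) = a • (1 : ℂ) + b • Complex.I := by
    simp [Complex.real_smul]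
  rw [h, map_add, L.map_smul, L.map_smul, smul_eq_mul, smul_eq_mul]

lemma hasDerivAt_curve_r (θ : ℝ) (r : ℝ) :
    HasDerivAt (fun s : ℝ => ((s : ℂ) * ee θ)) (ee θ) r := by
  simpa using (Complex.ofRealCLM.hasDerivAt (x := r)).mul_const (ee θ)

lemma hasDerivAt_ee (θ : ℝ) :
    HasDerivAt ee ((-Real.sin θ : ℂ) + (Real.cos θ : ℂ) * Complex.I) θ := by
  have hc : HasDerivAt (fun t : ℝ => (Real.cos t : ℂ)) (-Real.sin θ : ℂ) θ := by
    exact_mod_cast (Real.hasDerivAt_cos θ).ofReal_comp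
  have hs : HasDerivAt (fun t : ℝ => (Real.sin t : ℂ)) (Real.cos θ : ℂ) θ :=
    (Real.hasDerivAt_sin θ).ofReal_comp
  exact hc.add (hs.mul_const Complex.I)

lemma hasDerivAt_curve_theta (r θ : ℝ) :
    HasDerivAt (fun t : ℝ => (r : ℂ) * ee t)
      ((r * (-Real.sin θ) : ℝ) + ((r * Real.cos θ : ℝ) : ℂ) * Complex.I) θ := by
  have := (hasDerivAt_ee θ).const_mul (r : ℂ)
  exact this.congr_deriv (by push_cast; ring)

lemma diffAt {g : ℂ → ℝ} (hg : ContDiffOn ℝ 1 g (ball (0:ℂ) 1)) {z : ℂ}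
    (hz : z ∈ ball (0:ℂ) 1) : DifferentiableAt ℝ g z :=
  (hg.contDiffAt (isOpen_ball.mem_nhds hz)).differentiableAt one_ne_zero

lemma hasDerivAt_comp_r {g : ℂ → ℝ} (hg : ContDiffOn ℝ 1 g (ball (0:ℂ) 1)) (θ r : ℝ)
    (h : ((r : ℂ) * ee θ) ∈ ball (0:ℂ) 1) :
    HasDerivAt (fun s : ℝ => g ((s : ℂ) * ee θ))
      (Real.cos θ * d1 g ((r:ℂ) * ee θ) + Real.sin θ * dI g ((r:ℂ) * ee θ)) r := by
  have H := ((diffAt hg h).hasFDerivAt).comp_hasDerivAt r (hasDerivAt_curve_r θ r)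
  exact H.congr_deriv (clm_expand _ _ _)

lemma hasDerivAt_comp_theta {g : ℂ → ℝ} (hg : ContDiffOn ℝ 1 g (ball (0:ℂ) 1)) (r θ : ℝ)
    (h : ((r : ℂ) * ee θ) ∈ ball (0:ℂ) 1) :
    HasDerivAt (fun t : ℝ => g ((r : ℂ) * ee t))
      ((r * (-Real.sin θ)) * d1 g ((r:ℂ) * ee θ) + (r * Real.cos θ) * dI g ((r:ℂ) * ee θ)) θ := by
  have H := ((diffAt hg h).hasFDerivAt).comp_hasDerivAt θ (hasDerivAt_curve_theta r θ)
  exact H.congr_deriv (clm_expand _ _ _)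


-- new material
lemma contDiffOn_d1 {f : ℂ → ℝ} (hf : ContDiffOn ℝ 2 f (ball (0:ℂ) 1)) :
    ContDiffOn ℝ 1 (d1 f) (ball (0:ℂ) 1) :=
  (hf.fderiv_of_isOpen isOpen_ball (by norm_num)).clm_apply contDiffOn_const

lemma contDiffOn_dI {f : ℂ → ℝ} (hf : ContDiffOn ℝ 2 f (ball (0:ℂ) 1)) :
    ContDiffOn ℝ 1 (dI f) (ball (0:ℂ) 1) :=
  (hf.fderiv_of_isOpen isOpen_ball (by norm_num)).clm_apply contDiffOn_const

lemma contOn_d1 {g : ℂ → ℝ} (hg : ContDiffOn ℝ 1 g (ball (0:ℂ) 1)) :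
    ContinuousOn (d1 g) (ball (0:ℂ) 1) :=
  (hg.continuousOn_fderiv_of_isOpen isOpen_ball le_rfl).clm_apply continuousOn_const

lemma contOn_dI {g : ℂ → ℝ} (hg : ContDiffOn ℝ 1 g (ball (0:ℂ) 1)) :
    ContinuousOn (dI g) (ball (0:ℂ) 1) :=
  (hg.continuousOn_fderiv_of_isOpen isOpen_ball le_rfl).clm_apply continuousOn_const

/-- The set of polar parameters mapping into the unit ball. -/
def Bp : Set (ℝ × ℝ) := {p | |p.1| < 1}

lemma mapsTo_Pt : MapsTo Pt Bp (ball (0:ℂ) 1) := fun p hp => by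
  simp only [mem_ball, dist_zero_right, abs_Pt]
  exact hp

lemma contOn_comp_Pt {g : ℂ → ℝ} (hg : ContinuousOn g (ball (0:ℂ) 1)) :
    ContinuousOn (fun p => g (Pt p)) Bp :=
  hg.comp continuous_Pt.continuousOn mapsTo_Pt

noncomputable def Vf (f : ℂ → ℝ) (p : ℝ × ℝ) : ℝ :=
  Real.cos p.2 * d1 f (Pt p) + Real.sin p.2 * dI f (Pt p)
noncomputable def Wf (f : ℂ → ℝ) (p : ℝ × ℝ) : ℝ := p.1 * Vf f p
noncomputable def DWf (f : ℂ → ℝ) (p : ℝ × ℝ) : ℝ :=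
  Vf f p + p.1 * (Real.cos p.2 * Vf (d1 f) p + Real.sin p.2 * Vf (dI f) p)
noncomputable def Tf (g : ℂ → ℝ) (p : ℝ × ℝ) : ℝ :=
  (p.1 * (-Real.sin p.2)) * d1 g (Pt p) + (p.1 * Real.cos p.2) * dI g (Pt p)
noncomputable def Qf (f : ℂ → ℝ) (p : ℝ × ℝ) : ℝ :=
  -Real.sin p.2 * d1 f (Pt p) + Real.cos p.2 * dI f (Pt p)
noncomputable def DQf (f : ℂ → ℝ) (p : ℝ × ℝ) : ℝ :=
  (-Real.cos p.2 * d1 f (Pt p) + (-Real.sin p.2) * Tf (d1 f) p)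
  + (-Real.sin p.2 * dI f (Pt p) + Real.cos p.2 * Tf (dI f) p)

lemma DW_add_DQ (f : ℂ → ℝ) (p : ℝ × ℝ) :
    DWf f p + DQf f p = p.1 * lap f (Pt p) := by
  have h := Real.sin_sq_add_cos_sq p.2
  rw [lap_eq]
  simp only [DWf, DQf, Vf, Tf]
  linear_combination (p.1 * (d1 (d1 f) (Pt p) + dI (dI f) (Pt p))) * h

lemma hasDerivAt_Wf {f : ℂ → ℝ} (hf : ContDiffOn ℝ 2 f (ball (0:ℂ) 1)) (θ r : ℝ)
    (h : ((r : ℂ) * ee θ) ∈ ball (0:ℂ) 1) :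
    HasDerivAt (fun s => Wf f (s, θ)) (DWf f (r, θ)) r := by
  have h1 := hasDerivAt_comp_r (contDiffOn_d1 hf) θ r h
  have h2 := hasDerivAt_comp_r (contDiffOn_dI hf) θ r h
  have hV : HasDerivAt (fun s => Vf f (s, θ))
      (Real.cos θ * Vf (d1 f) (r, θ) + Real.sin θ * Vf (dI f) (r, θ)) r := by
    simpa [Vf, Pt, Pi.add_def] using (h1.const_mul (Real.cos θ)).add (h2.const_mul (Real.sin θ))
  have := (hasDerivAt_id r).mul hV
  simpa [Wf, DWf, Pi.mul_def, mul_comm, mul_assoc, mul_left_comm, add_comm] using this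

lemma hasDerivAt_Qf {f : ℂ → ℝ} (hf : ContDiffOn ℝ 2 f (ball (0:ℂ) 1)) (r θ : ℝ)
    (h : ((r : ℂ) * ee θ) ∈ ball (0:ℂ) 1) :
    HasDerivAt (fun t => Qf f (r, t)) (DQf f (r, θ)) θ := by
  have h1 := hasDerivAt_comp_theta (contDiffOn_d1 hf) r θ h
  have h2 := hasDerivAt_comp_theta (contDiffOn_dI hf) r θ h
  have hs : HasDerivAt (fun t : ℝ => -Real.sin t) (-Real.cos θ) θ := (Real.hasDerivAt_sin θ).neg
  have hc : HasDerivAt Real.cos (-Real.sin θ) θ := Real.hasDerivAt_cos θ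
  have := (hs.mul h1).add (hc.mul h2)
  simpa [Qf, DQf, Tf, Pt, Pi.add_def, Pi.mul_def, mul_comm, mul_assoc, mul_left_comm, add_comm, add_assoc, add_left_comm]
    using this

lemma contOn_Vf {f : ℂ → ℝ} (hf : ContDiffOn ℝ 1 f (ball (0:ℂ) 1)) :
    ContinuousOn (Vf f) Bp := by
  apply ContinuousOn.add
  · exact ((Real.continuous_cos.comp continuous_snd).continuousOn).mul
      (contOn_comp_Pt (contOn_d1 hf))
  · exact ((Real.continuous_sin.comp continuous_snd).continuousOn).mul
      (contOn_comp_Pt (contOn_dI hf))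

lemma contOn_Tf {f : ℂ → ℝ} (hf : ContDiffOn ℝ 1 f (ball (0:ℂ) 1)) :
    ContinuousOn (Tf f) Bp := by
  apply ContinuousOn.add
  · exact ((continuous_fst.mul (Real.continuous_sin.comp continuous_snd).neg).continuousOn).mul
      (contOn_comp_Pt (contOn_d1 hf))
  · exact ((continuous_fst.mul (Real.continuous_cos.comp continuous_snd)).continuousOn).mul
      (contOn_comp_Pt (contOn_dI hf))

lemma contOn_DWf {f : ℂ → ℝ} (hf : ContDiffOn ℝ 2 f (ball (0:ℂ) 1)) :
    ContinuousOn (DWf f) Bp := by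
  apply (contOn_Vf (hf.of_le one_le_two)).add
  apply (continuous_fst.continuousOn).mul
  apply ContinuousOn.add
  · exact ((Real.continuous_cos.comp continuous_snd).continuousOn).mul
      (contOn_Vf (contDiffOn_d1 hf))
  · exact ((Real.continuous_sin.comp continuous_snd).continuousOn).mul
      (contOn_Vf (contDiffOn_dI hf))

lemma contOn_DQf {f : ℂ → ℝ} (hf : ContDiffOn ℝ 2 f (ball (0:ℂ) 1)) :
    ContinuousOn (DQf f) Bp := by
  apply ContinuousOn.add
  · apply ContinuousOn.add
    · exact ((Real.continuous_cos.comp continuous_snd).neg.continuousOn).mul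
        (contOn_comp_Pt (contOn_d1 (hf.of_le one_le_two)))
    · exact ((Real.continuous_sin.comp continuous_snd).neg.continuousOn).mul
        (contOn_Tf (contDiffOn_d1 hf))
  · apply ContinuousOn.add
    · exact ((Real.continuous_sin.comp continuous_snd).neg.continuousOn).mul
        (contOn_comp_Pt (contOn_dI (hf.of_le one_le_two)))
    · exact ((Real.continuous_cos.comp continuous_snd).continuousOn).mul
        (contOn_Tf (contDiffOn_dI hf))


lemma mem_ball_mul (s θ : ℝ) (h : |s| < 1) : ((s : ℂ) * ee θ) ∈ ball (0:ℂ) 1 := by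
  have : ‖(s:ℂ) * ee θ‖ = |s| := abs_Pt (s, θ)
  simp only [mem_ball, dist_zero_right, this]
  exact h


/-- The radial profile of `phiRR`. -/
noncomputable def phir (R R' : ℝ) (r : ℝ) : ℝ :=
  if r ≤ R then 1 else if r ≤ R' then (1 / Real.log (R' / R)) * Real.log (R' / r) else 0

section radial
variable {R R' : ℝ} (hR0 : 0 < R) (hRR' : R < R') (hR'1 : R' < 1)
include hR0 hRR' hR'1

lemma logpos : 0 < Real.log (R' / R) := by
  apply Real.log_pos
  rw [lt_div_iff₀ hR0]; linarith

lemma theta_integral_zero {f : ℂ → ℝ} (hf : ContDiffOn ℝ 2 f (ball (0:ℂ) 1))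
    {r : ℝ} (hr : r ∈ Ioo (0:ℝ) 1) :
    ∫ θ in Ioo (-Real.pi) Real.pi, DQf f (r, θ) = 0 := by
  have hpi : -Real.pi ≤ Real.pi := by linarith [Real.pi_pos]
  have hmem : ∀ θ : ℝ, ((r : ℂ) * ee θ) ∈ ball (0:ℂ) 1 := fun θ =>
    mem_ball_mul r θ (by rw [abs_of_pos hr.1]; exact hr.2)
  have hcont : ContinuousOn (fun θ => DQf f (r, θ)) (uIcc (-Real.pi) Real.pi) := by
    apply (contOn_DQf hf).comp (Continuous.continuousOn (by fun_prop))
    intro θ _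
    simp only [Bp, mem_setOf_eq, abs_of_pos hr.1]
    exact hr.2
  have hftc := intervalIntegral.integral_eq_sub_of_hasDerivAt
    (f := fun t => Qf f (r, t)) (f' := fun t => DQf f (r, t))
    (fun θ _ => hasDerivAt_Qf hf r θ (hmem θ)) hcont.intervalIntegrable
  have hval : Qf f (r, Real.pi) = Qf f (r, -Real.pi) := by
    simp [Qf, Pt, ee, Real.sin_pi, Real.cos_pi]
  rw [← MeasureTheory.integral_Ioc_eq_integral_Ioo, ← intervalIntegral.integral_of_le hpi,
    hftc]
  rw [hval, sub_self]

lemma r_integral_eq {f : ℂ → ℝ} (hf : ContDiffOn ℝ 2 f (ball (0:ℂ) 1)) (θ : ℝ) :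
    ∫ r in Ioo (0:ℝ) 1, phir R R' r * DWf f (r, θ)
      = (1 / Real.log (R' / R)) * (f ((R':ℂ) * ee θ) - f ((R:ℂ) * ee θ)) := by
  set A := 1 / Real.log (R' / R) with hA
  have hL := logpos hR0 hRR' hR'1
  have hmem : ∀ s : ℝ, |s| < 1 → ((s : ℂ) * ee θ) ∈ ball (0:ℂ) 1 := fun s hs =>
    mem_ball_mul s θ hs
  -- continuity of the pieces on any subinterval of (-1,1)
  have hcDW : ContinuousOn (fun r => DWf f (r, θ)) {r : ℝ | |r| < 1} := by
    apply (contOn_DWf hf).comp (Continuous.continuousOn (by fun_prop))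
    intro r hr; exact hr
  have hcV : ContinuousOn (fun r => Vf f (r, θ)) {r : ℝ | |r| < 1} := by
    apply (contOn_Vf (hf.of_le one_le_two)).comp (Continuous.continuousOn (by fun_prop))
    intro r hr; exact hr
  have hsub1 : uIcc (0:ℝ) R ⊆ {r : ℝ | |r| < 1} := by
    rw [uIcc_of_le hR0.le]
    intro r hr; rw [mem_setOf_eq, abs_lt]; exact ⟨by linarith [hr.1], by linarith [hr.2]⟩
  have hsub2 : uIcc R R' ⊆ {r : ℝ | |r| < 1} := by
    rw [uIcc_of_le hRR'.le]
    intro r hr; rw [mem_setOf_eq, abs_lt]; exact ⟨by linarith [hr.1], by linarith [hr.2]⟩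
  -- the three pieces
  have hI1 : ∫ r in (0:ℝ)..R, phir R R' r * DWf f (r, θ) = Wf f (R, θ) := by
    have hcong : EqOn (fun r => phir R R' r * DWf f (r, θ)) (fun r => DWf f (r, θ))
        (uIcc (0:ℝ) R) := by
      intro r hr
      rw [uIcc_of_le hR0.le] at hr
      simp only [phir, if_pos hr.2, one_mul]
    rw [intervalIntegral.integral_congr hcong]
    have := intervalIntegral.integral_eq_sub_of_hasDerivAt
      (f := fun s => Wf f (s, θ)) (f' := fun r => DWf f (r, θ))
      (fun r hr => hasDerivAt_Wf hf θ r (hmem r (hsub1 hr)))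
      ((hcDW.mono hsub1).intervalIntegrable)
    rw [this]
    simp [Wf]
  have hI3 : ∫ r in R'..(1:ℝ), phir R R' r * DWf f (r, θ) = 0 := by
    have hcong : EqOn (fun r => phir R R' r * DWf f (r, θ)) (fun _ => (0:ℝ))
        (uIcc R' (1:ℝ)) := by
      intro r hr
      rw [uIcc_of_le hR'1.le] at hr
      have h1 : ¬ (r ≤ R) := by push_neg; linarith [hr.1]
      by_cases h2 : r ≤ R'
      · have h3 : ¬ (R' ≤ R) := not_le.mpr hRR'
        have hrR : r = R' := le_antisymm h2 hr.1
        subst hrR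
        simp [phir, h1, h3, div_self (show r ≠ 0 by linarith), Real.log_one]
      · simp [phir, h1, h2]
    rw [intervalIntegral.integral_congr hcong]
    simp
  -- middle piece
  have hlogcont : ContinuousOn (fun r : ℝ => Real.log (R' / r)) (uIcc R R') := by
    have hne : ∀ r ∈ uIcc R R', r ≠ 0 := by
      intro r hr
      rw [uIcc_of_le hRR'.le] at hr
      exact ne_of_gt (by linarith [hr.1])
    have hdiv : ContinuousOn (fun r : ℝ => R' / r) (uIcc R R') :=
      continuousOn_const.div continuousOn_id hne
    apply Real.continuousOn_log.comp hdiv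
    intro r hr
    rw [uIcc_of_le hRR'.le] at hr
    have : 0 < R' / r := div_pos (by linarith) (by linarith [hr.1])
    simp [ne_of_gt this]
  have hIntV : IntervalIntegrable (fun r => (-A) * Vf f (r, θ)) volume R R' :=
    (continuousOn_const.mul (hcV.mono hsub2)).intervalIntegrable
  have hIntLogDW : IntervalIntegrable (fun r => A * Real.log (R' / r) * DWf f (r, θ))
      volume R R' :=
    ((continuousOn_const.mul hlogcont).mul (hcDW.mono hsub2)).intervalIntegrable
  have hmid : ∫ r in R..R', phir R R' r * DWf f (r, θ)
      = -Wf f (R, θ) + A * (f ((R':ℂ) * ee θ) - f ((R:ℂ) * ee θ)) := by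
    have hcong : EqOn (fun r => phir R R' r * DWf f (r, θ))
        (fun r => A * Real.log (R' / r) * DWf f (r, θ)) (uIcc R R') := by
      intro r hr
      rw [uIcc_of_le hRR'.le] at hr
      by_cases h1 : r ≤ R
      · have hrR : r = R := le_antisymm h1 hr.1
        subst hrR
        have hone : A * Real.log (R' / r) = 1 := by
          rw [hA, one_div, inv_mul_cancel₀ (ne_of_gt hL)]
        simp only [phir, if_pos le_rfl, one_mul]
        rw [hone, one_mul]
      · simp only [phir, if_neg h1, if_pos hr.2, hA]
    rw [intervalIntegral.integral_congr hcong]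
    -- FTC for K r = A * log(R'/r) * Wf (r,θ)
    have hKderiv : ∀ r ∈ uIcc R R',
        HasDerivAt (fun r => A * Real.log (R' / r) * Wf f (r, θ))
          ((-A) * Vf f (r, θ) + A * Real.log (R' / r) * DWf f (r, θ)) r := by
      intro r hr
      have hrpos : 0 < r := by
        rw [uIcc_of_le hRR'.le] at hr; linarith [hr.1]
      have hr0 : r ≠ 0 := ne_of_gt hrpos
      have hR'0 : R' ≠ 0 := by linarith
      have hlog : HasDerivAt (fun r : ℝ => Real.log (R' / r)) (-1/r) r := by
        have hd : HasDerivAt (fun r : ℝ => R' / r) (-R'/r^2) r := by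
          simpa [div_eq_mul_inv, mul_comm] using (hasDerivAt_inv hr0).const_mul R'
        have := (Real.hasDerivAt_log (ne_of_gt (div_pos (by linarith) hrpos))).comp r hd
        refine this.congr_deriv ?_
        rw [inv_div]
        field_simp
      have := ((hlog.const_mul A).mul (hasDerivAt_Wf hf θ r (hmem r (hsub2 hr))))
      refine this.congr_deriv ?_
      simp only [Wf]
      field_simp
    have hKftc := intervalIntegral.integral_eq_sub_of_hasDerivAt hKderiv
      (hIntV.add hIntLogDW)
    have hKR' : A * Real.log (R' / R') * Wf f (R', θ) = 0 := by
      rw [div_self (by linarith : R' ≠ 0), Real.log_one]; ring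
    have hKR : A * Real.log (R' / R) * Wf f (R, θ) = Wf f (R, θ) := by
      rw [hA, one_div, inv_mul_cancel₀ (ne_of_gt hL), one_mul]
    rw [hKR', hKR, zero_sub] at hKftc
    -- FTC for -A * f along the ray
    have hI4 : ∫ r in R..R', (-A) * Vf f (r, θ)
        = -(A * (f ((R':ℂ) * ee θ) - f ((R:ℂ) * ee θ))) := by
      have hderiv : ∀ r ∈ uIcc R R',
          HasDerivAt (fun s : ℝ => (-A) * f ((s:ℂ) * ee θ)) ((-A) * Vf f (r, θ)) r := by
        intro r hr
        have := (hasDerivAt_comp_r (hf.of_le one_le_two) θ r (hmem r (hsub2 hr))).const_mul (-A)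
        simpa [Vf, Pt] using this
      rw [intervalIntegral.integral_eq_sub_of_hasDerivAt hderiv hIntV]
      ring
    have hadd := intervalIntegral.integral_add hIntV hIntLogDW
    rw [hKftc, hI4] at hadd
    linarith
  -- integrability of the full integrand on the pieces
  have hint1 : IntervalIntegrable (fun r => phir R R' r * DWf f (r, θ)) volume 0 R := by
    rw [intervalIntegrable_iff_integrableOn_Ioc_of_le hR0.le]
    apply IntegrableOn.congr_fun (g := fun r => phir R R' r * DWf f (r, θ))
      (f := fun r => DWf f (r, θ)) ?_ ?_ measurableSet_Ioc
    · have h5 : IntervalIntegrable (fun r => DWf f (r, θ)) volume 0 R :=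
        (hcDW.mono hsub1).intervalIntegrable
      rw [intervalIntegrable_iff_integrableOn_Ioc_of_le hR0.le] at h5
      exact h5
    · intro r hr
      simp only [phir, if_pos hr.2, one_mul]
  have hint2 : IntervalIntegrable (fun r => phir R R' r * DWf f (r, θ)) volume R R' := by
    rw [intervalIntegrable_iff_integrableOn_Ioc_of_le hRR'.le]
    apply IntegrableOn.congr_fun
      (f := fun r => A * Real.log (R' / r) * DWf f (r, θ)) ?_ ?_ measurableSet_Ioc
    · have := hIntLogDW
      rw [intervalIntegrable_iff_integrableOn_Ioc_of_le hRR'.le] at this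
      exact this
    · intro r hr
      simp only [phir, if_neg (not_le.mpr hr.1), if_pos hr.2, hA]
  have hint3 : IntervalIntegrable (fun r => phir R R' r * DWf f (r, θ)) volume R' 1 := by
    rw [intervalIntegrable_iff_integrableOn_Ioc_of_le hR'1.le]
    apply IntegrableOn.congr_fun (f := fun _ => (0:ℝ))
      integrableOn_zero ?_ measurableSet_Ioc
    intro r hr
    have h1 : ¬ (r ≤ R) := by push_neg; linarith [hr.1]
    have h2 : ¬ (r ≤ R') := not_le.mpr hr.1
    simp [phir, h1, h2]
  have hsplit1 := intervalIntegral.integral_add_adjacent_intervals hint1 hint2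
  have hsplit2 := intervalIntegral.integral_add_adjacent_intervals (hint1.trans hint2) hint3
  rw [← MeasureTheory.integral_Ioc_eq_integral_Ioo,
    ← intervalIntegral.integral_of_le (by norm_num : (0:ℝ) ≤ 1)]
  rw [← hsplit2, ← hsplit1, hI1, hI3, hmid, hA]
  ring

end radial

open Real in
lemma real_polarCoord_target : polarCoord.target = Ioi (0:ℝ) ×ˢ Ioo (-π) π := rfl

lemma phiRR_eq (R R' : ℝ) (z : ℂ) : phiRR R R' z = phir R R' ‖z‖ := rfl

lemma setIntegral_prod' {f : ℝ × ℝ → ℝ} (s t : Set ℝ) (hf : IntegrableOn f (s ×ˢ t)) :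
    ∫ z in s ×ˢ t, f z = ∫ x in s, ∫ y in t, f (x, y) := by
  have h1 : (volume : Measure (ℝ × ℝ)) = (volume : Measure ℝ).prod volume := rfl
  rw [h1, ← Measure.prod_restrict]
  apply integral_prod
  rw [Measure.prod_restrict]
  exact hf

lemma setIntegral_prod_symm' {f : ℝ × ℝ → ℝ} (s t : Set ℝ) (hf : IntegrableOn f (s ×ˢ t)) :
    ∫ z in s ×ˢ t, f z = ∫ y in t, ∫ x in s, f (x, y) := by
  have h1 : (volume : Measure (ℝ × ℝ)) = (volume : Measure ℝ).prod volume := rfl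
  rw [h1, ← Measure.prod_restrict]
  apply integral_prod_symm
  rw [Measure.prod_restrict]
  exact hf

section phirfacts
variable {R R' : ℝ} (hR0 : 0 < R) (hRR' : R < R') (hR'1 : R' < 1)
include hR0 hRR' hR'1

lemma phir_nonneg (r : ℝ) : 0 ≤ phir R R' r := by
  have hL := logpos hR0 hRR' hR'1
  unfold phir
  split_ifs with h1 h2
  · norm_num
  · push_neg at h1
    apply mul_nonneg (by positivity)
    apply Real.log_nonneg
    rw [le_div_iff₀ (by linarith)]
    linarith
  · exact le_refl 0

lemma phir_le_one (r : ℝ) : phir R R' r ≤ 1 := by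
  have hL := logpos hR0 hRR' hR'1
  unfold phir
  split_ifs with h1 h2
  · exact le_refl 1
  · push_neg at h1
    have hlogle : Real.log (R' / r) ≤ Real.log (R' / R) := by
      rw [Real.log_le_log_iff (div_pos (by linarith) (by linarith)) (div_pos (by linarith) hR0)]
      apply div_le_div_of_nonneg_left (by linarith) hR0 h1.le
    calc 1 / Real.log (R' / R) * Real.log (R' / r)
        ≤ 1 / Real.log (R' / R) * Real.log (R' / R) :=
          mul_le_mul_of_nonneg_left hlogle (by positivity)
      _ = 1 := by rw [one_div, inv_mul_cancel₀ (ne_of_gt hL)]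
  · norm_num


lemma phir_abs_le_one (r : ℝ) : |phir R R' r| ≤ 1 := by
  rw [abs_le]
  exact ⟨by linarith [phir_nonneg hR0 hRR' hR'1 r], phir_le_one hR0 hRR' hR'1 r⟩

lemma phir_eq_zero (r : ℝ) (hr : R' < r) : phir R R' r = 0 := by
  have h1 : ¬ (r ≤ R) := by push_neg; linarith
  have h2 : ¬ (r ≤ R') := not_le.mpr hr
  simp [phir, h1, h2]

theorem num_bound {f : ℂ → ℝ} (hf : ContDiffOn ℝ 2 f (ball (0:ℂ) 1)) {M : ℝ} (hM0 : 0 ≤ M)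
    (hM : ∀ z ∈ ball (0:ℂ) 1, |f z| ≤ M) :
    |∫ z in ball (0:ℂ) 1, phiRR R R' z * lap f z|
      ≤ (1 / Real.log (R' / R)) * (4 * Real.pi * M) := by
  have hL := logpos hR0 hRR' hR'1
  have hπ := Real.pi_pos
  set A : ℝ := 1 / Real.log (R' / R) with hA
  have hA0 : 0 < A := by rw [hA]; positivity
  set F : ℂ → ℝ := fun z => phiRR R R' z * lap f z with hF
  set T' : Set (ℝ × ℝ) := Ioo (0:ℝ) 1 ×ˢ Ioo (-Real.pi) Real.pi with hT'
  have hT'm : MeasurableSet T' := measurableSet_Ioo.prod measurableSet_Ioo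
  have hTsub : T' ⊆ polarCoord.target := by
    rw [real_polarCoord_target]
    exact prod_mono Ioo_subset_Ioi_self subset_rfl
  have h1 : ∫ z in ball (0:ℂ) 1, F z = ∫ z, (ball (0:ℂ) 1).indicator F z :=
    (integral_indicator measurableSet_ball).symm
  have h2 : ∫ z, (ball (0:ℂ) 1).indicator F z
      = ∫ p in polarCoord.target, p.1 • (ball (0:ℂ) 1).indicator F (Complex.polarCoord.symm p) :=
    (Complex.integral_comp_polarCoord_symm _).symm
  have h3 : ∫ p in polarCoord.target, p.1 • (ball (0:ℂ) 1).indicator F (Complex.polarCoord.symm p)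
      = ∫ p in T', p.1 * (phir R R' p.1 * lap f (Pt p)) := by
    rw [setIntegral_congr_fun polarCoord.open_target.measurableSet
      (g := T'.indicator fun p => p.1 • (ball (0:ℂ) 1).indicator F (Complex.polarCoord.symm p))
      ?_]
    · rw [setIntegral_indicator hT'm, inter_eq_self_of_subset_right hTsub]
      apply setIntegral_congr_fun hT'm
      intro p hp
      rw [hT', mem_prod] at hp
      have hp1 : 0 < p.1 := hp.1.1
      have hp2 : p.1 < 1 := hp.1.2
      have hball : Complex.polarCoord.symm p ∈ ball (0:ℂ) 1 := by
        rw [Pt_eq]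
        simp only [mem_ball, dist_zero_right, abs_Pt, abs_of_pos hp1]
        exact hp2
      show p.1 • (ball (0:ℂ) 1).indicator F (Complex.polarCoord.symm p)
        = p.1 * (phir R R' p.1 * lap f (Pt p))
      rw [indicator_of_mem hball, smul_eq_mul, hF]
      simp only
      rw [Pt_eq, phiRR_eq, abs_Pt, abs_of_pos hp1]
    · intro p hp
      rw [real_polarCoord_target, mem_prod] at hp
      by_cases hmem : p ∈ T'
      · rw [indicator_of_mem hmem]
      · rw [indicator_of_notMem hmem]
        show p.1 • (ball (0:ℂ) 1).indicator F (Complex.polarCoord.symm p) = 0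
        have hp1 : 1 ≤ p.1 := by
          by_contra hcon
          push_neg at hcon
          exact hmem (by rw [hT', mem_prod]; exact ⟨⟨hp.1, hcon⟩, hp.2⟩)
        have : Complex.polarCoord.symm p ∉ ball (0:ℂ) 1 := by
          rw [Pt_eq]
          simp only [mem_ball, dist_zero_right, abs_Pt, not_lt]
          calc (1:ℝ) ≤ p.1 := hp1
            _ ≤ |p.1| := le_abs_self _
        rw [indicator_of_notMem this, smul_zero]
  rw [h1, h2, h3]
  have hIdent : EqOn (fun p : ℝ × ℝ => p.1 * (phir R R' p.1 * lap f (Pt p)))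
      (fun p => phir R R' p.1 * DWf f p + phir R R' p.1 * DQf f p) T' := by
    intro p _
    simp only
    rw [← mul_add, DW_add_DQ]
    ring
  have hbound : ∀ z ∈ ball (0:ℂ) 1, A * (4 * Real.pi * M) ≥ 0 := by
    intro z _; positivity
  by_cases hInt : IntegrableOn (fun p : ℝ × ℝ => p.1 * (phir R R' p.1 * lap f (Pt p))) T' volume
  swap
  · rw [integral_undef hInt]
    simp only [abs_zero]
    positivity
  -- bound for DQf on the compact set
  have hKsub : (Icc (0:ℝ) R' ×ˢ Icc (-Real.pi) Real.pi) ⊆ Bp := by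
    intro p hp
    rw [mem_prod] at hp
    simp only [Bp, mem_setOf_eq, abs_lt]
    exact ⟨by linarith [hp.1.1], by linarith [hp.1.2]⟩
  obtain ⟨C, hC⟩ := (isCompact_Icc.prod isCompact_Icc).exists_bound_of_continuousOn
    ((contOn_DQf hf).mono hKsub)
  have hT'fin : volume T' < ⊤ :=
    ((Metric.isBounded_Ioo _ _).prod (Metric.isBounded_Ioo _ _)).measure_lt_top
  have hT'Bp : T' ⊆ Bp := by
    intro p hp
    rw [hT', mem_prod] at hp
    simp only [Bp, mem_setOf_eq, abs_lt]
    exact ⟨by linarith [hp.1.1], hp.1.2⟩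
  have hφmeas : Measurable (fun r => phir R R' r) := by
    unfold phir
    apply Measurable.ite (measurableSet_le measurable_id measurable_const) measurable_const
    apply Measurable.ite (measurableSet_le measurable_id measurable_const) ?_ measurable_const
    exact (Real.measurable_log.comp (measurable_const.div measurable_id)).const_mul _
  have hIntDQ : IntegrableOn (fun p : ℝ × ℝ => phir R R' p.1 * DQf f p) T' volume := by
    apply Integrable.mono' (g := fun _ => max C 0)
      (integrableOn_const hT'fin.ne)
    · exact ((hφmeas.comp measurable_fst).aestronglyMeasurable).mul
        (((contOn_DQf hf).mono hT'Bp).aestronglyMeasurable hT'm)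
    · rw [ae_restrict_iff' hT'm]
      apply ae_of_all
      intro p hp
      by_cases hpR' : p.1 ≤ R'
      · have hpK : p ∈ Icc (0:ℝ) R' ×ˢ Icc (-Real.pi) Real.pi := by
          rw [hT', mem_prod] at hp
          rw [mem_prod]
          exact ⟨⟨hp.1.1.le, hpR'⟩, ⟨hp.2.1.le, hp.2.2.le⟩⟩
        calc ‖phir R R' p.1 * DQf f p‖ = |phir R R' p.1| * ‖DQf f p‖ := by
              rw [Real.norm_eq_abs, Real.norm_eq_abs, abs_mul]
          _ ≤ 1 * C := by
              apply mul_le_mul (phir_abs_le_one hR0 hRR' hR'1 _) (hC p hpK)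
                (norm_nonneg _) one_pos.le
          _ ≤ max C 0 := by rw [one_mul]; exact le_max_left _ _
      · push_neg at hpR'
        rw [phir_eq_zero hR0 hRR' hR'1 _ hpR']
        simp only [zero_mul, norm_zero]
        exact le_max_right _ _
  have hIntSum : IntegrableOn
      (fun p : ℝ × ℝ => phir R R' p.1 * DWf f p + phir R R' p.1 * DQf f p) T' volume :=
    hInt.congr_fun hIdent hT'm
  have hIntDW : IntegrableOn (fun p : ℝ × ℝ => phir R R' p.1 * DWf f p) T' volume := by
    apply IntegrableOn.congr_fun (hIntSum.sub hIntDQ) ?_ hT'm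
    intro p _
    simp only [Pi.sub_apply]
    ring
  rw [setIntegral_congr_fun hT'm hIdent, integral_add hIntDW hIntDQ]
  have hDQ0 : ∫ p in T', phir R R' p.1 * DQf f p = 0 := by
    rw [hT', setIntegral_prod' _ _ hIntDQ]
    rw [setIntegral_congr_fun measurableSet_Ioo (g := fun _ => (0:ℝ))]
    · simp
    · intro r hr
      simp only
      rw [integral_const_mul, theta_integral_zero hR0 hRR' hR'1 hf hr, mul_zero]
  have hDW : ∫ p in T', phir R R' p.1 * DWf f p
      = ∫ θ in Ioo (-Real.pi) Real.pi, A * (f ((R':ℂ) * ee θ) - f ((R:ℂ) * ee θ)) := by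
    rw [hT', setIntegral_prod_symm' _ _ hIntDW]
    apply setIntegral_congr_fun measurableSet_Ioo
    intro θ _
    exact r_integral_eq hR0 hRR' hR'1 hf θ
  rw [hDQ0, hDW, add_zero]
  -- final bound
  have hcurve : ∀ s : ℝ, 0 < s → s < 1 → Continuous (fun θ : ℝ => f ((s:ℂ) * ee θ)) := by
    intro s hs0 hs1
    apply (hf.continuousOn.mono (subset_refl _)).comp_continuous
      (by unfold ee; fun_prop)
    intro θ
    exact mem_ball_mul s θ (by rw [abs_of_pos hs0]; exact hs1)
  have hmeasInt : AEStronglyMeasurable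
      (fun θ => A * (f ((R':ℂ) * ee θ) - f ((R:ℂ) * ee θ)))
      (volume.restrict (Ioo (-Real.pi) Real.pi)) := by
    apply Continuous.aestronglyMeasurable
    exact continuous_const.mul ((hcurve R' (by linarith) hR'1).sub
      (hcurve R hR0 (by linarith)))
  have hbd : ∀ θ ∈ Ioo (-Real.pi) Real.pi,
      ‖A * (f ((R':ℂ) * ee θ) - f ((R:ℂ) * ee θ))‖ ≤ A * (2 * M) := by
    intro θ _
    rw [Real.norm_eq_abs, abs_mul, abs_of_pos hA0]
    apply mul_le_mul_of_nonneg_left ?_ hA0.le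
    calc |f ((R':ℂ) * ee θ) - f ((R:ℂ) * ee θ)|
        ≤ |f ((R':ℂ) * ee θ)| + |f ((R:ℂ) * ee θ)| := abs_sub _ _
      _ ≤ M + M := add_le_add
          (hM _ (mem_ball_mul R' θ (by rw [abs_of_pos (by linarith)]; exact hR'1)))
          (hM _ (mem_ball_mul R θ (by rw [abs_of_pos hR0]; linarith)))
      _ = 2 * M := by ring
  have := norm_setIntegral_le_of_norm_le_const (C := A * (2 * M))
    (by rw [Real.volume_Ioo]; exact ENNReal.ofReal_lt_top) hbd
  rw [Real.norm_eq_abs] at this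
  calc |∫ θ in Ioo (-Real.pi) Real.pi, A * (f ((R':ℂ) * ee θ) - f ((R:ℂ) * ee θ))|
      ≤ A * (2 * M) * (volume (Ioo (-Real.pi) Real.pi)).toReal := this
    _ = A * (4 * Real.pi * M) := by
        rw [Real.volume_Ioo, ENNReal.toReal_ofReal (by linarith)]
        ring

end phirfacts

set_option maxHeartbeats 1000000 in
theorem den_bound {R R' : ℝ} (hRhalf : 1/2 ≤ R) (hRR' : R < R') (hR'1 : R' < 1) :
    Real.pi * (1 / Real.log (R' / R)) * (Real.log ((1 - R) / (1 - R')) - 1)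
      ≤ ∫ z in ball (0:ℂ) 1, phiRR R R' z * (4 / (1 - ‖z‖ ^ 2) ^ 2) := by
  have hR0 : 0 < R := by linarith
  have hL := logpos hR0 hRR' hR'1
  have hπ := Real.pi_pos
  set A : ℝ := 1 / Real.log (R' / R) with hA
  have hA0 : 0 < A := by rw [hA]; positivity
  set Fd : ℂ → ℝ := fun z => phiRR R R' z * (4 / (1 - ‖z‖ ^ 2) ^ 2) with hFd
  set Gd : ℝ × ℝ → ℝ :=
    fun p => p.1 • (ball (0:ℂ) 1).indicator Fd (Complex.polarCoord.symm p) with hGd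
  set T2 : Set (ℝ × ℝ) := Ioo R R' ×ˢ Ioo (-Real.pi) Real.pi with hT2
  have hT2m : MeasurableSet T2 := measurableSet_Ioo.prod measurableSet_Ioo
  have hT2sub : T2 ⊆ polarCoord.target := by
    rw [real_polarCoord_target]
    apply prod_mono ?_ subset_rfl
    intro r hr; exact lt_trans hR0 hr.1
  have hFd_nonneg : ∀ z, 0 ≤ Fd z := by
    intro z
    apply mul_nonneg
    · rw [phiRR_eq]; exact phir_nonneg hR0 hRR' hR'1 _
    · positivity
  have hGd_nonneg : ∀ p ∈ polarCoord.target, 0 ≤ Gd p := by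
    intro p hp
    rw [real_polarCoord_target, mem_prod] at hp
    apply smul_nonneg (le_of_lt hp.1)
    apply indicator_nonneg
    intro z _; exact hFd_nonneg z
  -- polar change of variables
  have hpolar : ∫ z in ball (0:ℂ) 1, Fd z = ∫ p in polarCoord.target, Gd p := by
    rw [← integral_indicator measurableSet_ball,
      ← Complex.integral_comp_polarCoord_symm ((ball (0:ℂ) 1).indicator Fd)]
  -- integrability of Gd on the target
  have hGdmeas : Measurable Gd := by
    have h1 : Measurable Fd := by
      apply Measurable.mul
      · unfold phiRR
        apply Measurable.ite (measurableSet_le continuous_norm.measurable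
          measurable_const) measurable_const
        apply Measurable.ite (measurableSet_le continuous_norm.measurable
          measurable_const) ?_ measurable_const
        exact (Real.measurable_log.comp
          (measurable_const.div continuous_norm.measurable)).const_mul _
      · apply Measurable.div measurable_const
        exact ((measurable_const.sub (continuous_norm.measurable.pow_const 2)).pow_const 2)
    have : Gd = fun p => p.1 * (ball (0:ℂ) 1).indicator Fd (Pt p) := by
      funext p
      show p.1 • (ball (0:ℂ) 1).indicator Fd (Complex.polarCoord.symm p) = _
      rw [Pt_eq, smul_eq_mul]
    rw [this]
    exact measurable_fst.mul ((h1.indicator measurableSet_ball).comp continuous_Pt.measurable)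
  set CB : ℝ := R' * (4 / (1 - R' ^ 2) ^ 2) with hCB
  have hCB0 : 0 ≤ CB := by
    rw [hCB]
    apply mul_nonneg (by linarith)
    positivity
  set S : Set (ℝ × ℝ) := Ioc (0:ℝ) R' ×ˢ Ioo (-Real.pi) Real.pi with hS
  have hSm : MeasurableSet S := measurableSet_Ioc.prod measurableSet_Ioo
  have hSfin : volume S < ⊤ :=
    ((Metric.isBounded_Ioc _ _).prod (Metric.isBounded_Ioo _ _)).measure_lt_top
  have hIntGd : IntegrableOn Gd polarCoord.target volume := by
    apply Integrable.mono' (g := S.indicator fun _ => CB)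
      (((integrable_indicator_iff hSm).mpr (integrableOn_const hSfin.ne)).restrict)
      hGdmeas.aestronglyMeasurable.restrict
    rw [ae_restrict_iff' polarCoord.open_target.measurableSet]
    apply ae_of_all
    intro p hp
    rw [real_polarCoord_target, mem_prod] at hp
    by_cases hp1 : p.1 ≤ R'
    · have hpS : p ∈ S := by rw [hS, mem_prod]; exact ⟨⟨hp.1, hp1⟩, hp.2⟩
      rw [indicator_of_mem hpS]
      have hball : Complex.polarCoord.symm p ∈ ball (0:ℂ) 1 := by
        rw [Pt_eq]
        simp only [mem_ball, dist_zero_right, abs_Pt, abs_of_pos (show (0:ℝ) < p.1 from hp.1)]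
        linarith
      rw [hGd]
      simp only [smul_eq_mul]
      rw [indicator_of_mem hball, Real.norm_eq_abs, abs_mul, abs_of_pos hp.1,
        _root_.abs_of_nonneg (hFd_nonneg _)]
      have hdens : (4 / (1 - ‖Complex.polarCoord.symm p‖ ^ 2) ^ 2)
          ≤ 4 / (1 - R' ^ 2) ^ 2 := by
        rw [Pt_eq, abs_Pt, abs_of_pos hp.1]
        have hp0 : (0:ℝ) < p.1 := hp.1
        have ha : 0 < 1 - p.1 ^ 2 := by nlinarith
        have hb : 0 < 1 - R' ^ 2 := by nlinarith
        have hle : 1 - R' ^ 2 ≤ 1 - p.1 ^ 2 := by nlinarith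
        have hpow := pow_le_pow_left₀ hb.le hle 2
        rw [div_le_div_iff₀ (pow_pos ha 2) (pow_pos hb 2)]
        nlinarith
      have hφ : phiRR R R' (Complex.polarCoord.symm p) ≤ 1 := by
        rw [phiRR_eq]; exact phir_le_one hR0 hRR' hR'1 _
      have hφ0 : 0 ≤ phiRR R R' (Complex.polarCoord.symm p) := by
        rw [phiRR_eq]; exact phir_nonneg hR0 hRR' hR'1 _
      calc p.1 * Fd (Complex.polarCoord.symm p)
          ≤ R' * Fd (Complex.polarCoord.symm p) :=
            mul_le_mul_of_nonneg_right hp1 (hFd_nonneg _)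
        _ ≤ R' * (1 * (4 / (1 - R' ^ 2) ^ 2)) := by
            apply mul_le_mul_of_nonneg_left ?_ (by linarith)
            rw [hFd]
            simp only
            exact mul_le_mul hφ hdens (by positivity) one_pos.le
        _ = CB := by rw [hCB, one_mul]
    · push_neg at hp1
      have hval : Gd p = 0 := by
        rw [hGd]
        simp only [smul_eq_mul]
        by_cases hp2 : p.1 < 1
        · have hball : Complex.polarCoord.symm p ∈ ball (0:ℂ) 1 := by
            rw [Pt_eq]
            simp only [mem_ball, dist_zero_right, abs_Pt, abs_of_pos (show (0:ℝ) < p.1 from hp.1)]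
            exact hp2
          rw [indicator_of_mem hball, hFd]
          simp only
          rw [phiRR_eq, Pt_eq, abs_Pt, abs_of_pos hp.1,
            phir_eq_zero hR0 hRR' hR'1 _ hp1, zero_mul, mul_zero]
        · have hball : Complex.polarCoord.symm p ∉ ball (0:ℂ) 1 := by
            rw [Pt_eq]
            simp only [mem_ball, dist_zero_right, abs_Pt, not_lt,
              abs_of_pos (show (0:ℝ) < p.1 from hp.1)]
            linarith
          rw [indicator_of_notMem hball, mul_zero]
      rw [hval, norm_zero]
      exact indicator_nonneg (fun _ _ => hCB0) p
  -- restrict to T2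
  have hstep1 : ∫ p in T2, Gd p ≤ ∫ p in polarCoord.target, Gd p := by
    apply setIntegral_mono_set hIntGd
    · filter_upwards [ae_restrict_mem polarCoord.open_target.measurableSet] with p hp
        using hGd_nonneg p hp
    · exact HasSubset.Subset.eventuallyLE hT2sub
  -- lower bound on T2 by an explicit function
  set bd : ℝ × ℝ → ℝ := fun p => A * ((R' - p.1) / (2 * (1 - p.1) ^ 2)) with hbd
  have hbdmeas : Measurable bd := by
    apply Measurable.const_mul
    apply Measurable.div (measurable_const.sub measurable_fst)
    exact ((measurable_const.sub measurable_fst).pow_const 2).const_mul 2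
  have hT2fin : volume T2 < ⊤ :=
    ((Metric.isBounded_Ioo _ _).prod (Metric.isBounded_Ioo _ _)).measure_lt_top
  have hIntbd : IntegrableOn bd T2 volume := by
    apply Integrable.mono' (g := fun _ => A * (1 / (2 * (1 - R') ^ 2)))
      (integrableOn_const hT2fin.ne) hbdmeas.aestronglyMeasurable.restrict
    rw [ae_restrict_iff' hT2m]
    apply ae_of_all
    intro p hp
    rw [hT2, mem_prod] at hp
    have h1 : 0 < 1 - p.1 := by linarith [hp.1.2]
    have h2 : 0 ≤ R' - p.1 := by linarith [hp.1.2]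
    rw [hbd, Real.norm_eq_abs]
    simp only
    rw [abs_mul, abs_of_pos hA0, _root_.abs_of_nonneg (by positivity)]
    apply mul_le_mul_of_nonneg_left ?_ hA0.le
    have hge : 1 - p.1 ≥ 1 - R' := by linarith [hp.1.2]
    have hgt : 0 < 1 - R' := by linarith
    apply div_le_div₀ (by norm_num) (by linarith [hp.1.1, hp.1.2]) (by nlinarith) (by nlinarith)
  have hstep2 : ∫ p in T2, bd p ≤ ∫ p in T2, Gd p := by
    apply setIntegral_mono_on hIntbd (hIntGd.mono_set hT2sub) hT2m
    intro q hq
    obtain ⟨r, θ⟩ := q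
    rw [hT2, mem_prod] at hq
    have hrR : R < r := hq.1.1
    have hrR' : r < R' := hq.1.2
    have hr0 : 0 < r := lt_trans hR0 hrR
    have hr1 : r < 1 := by linarith
    have hball : Complex.polarCoord.symm (r, θ) ∈ ball (0:ℂ) 1 := by
      rw [Pt_eq]
      simp only [mem_ball, dist_zero_right, abs_Pt]
      rw [abs_of_pos hr0]
      exact hr1
    have hGdval : Gd (r, θ) = r * ((A * Real.log (R' / r)) * (4 / (1 - r ^ 2) ^ 2)) := by
      rw [hGd]
      show r • (ball (0:ℂ) 1).indicator Fd (Complex.polarCoord.symm (r, θ)) = _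
      rw [smul_eq_mul, indicator_of_mem hball, hFd]
      show r * (phiRR R R' _ * (4 / (1 - ‖Complex.polarCoord.symm (r, θ)‖ ^ 2) ^ 2)) = _
      rw [phiRR_eq, Pt_eq, abs_Pt]
      show r * (phir R R' |(r, θ).1| * _) = _
      rw [abs_of_pos hr0]
      have hnotle : ¬ (r ≤ R) := not_le.mpr hrR
      rw [phir, if_neg hnotle, if_pos hrR'.le, hA]
    rw [hGdval, hbd]
    show A * ((R' - r) / (2 * (1 - r) ^ 2)) ≤ _
    have hR'0 : (0:ℝ) < R' := by linarith
    have hlog : R' - r ≤ Real.log (R' / r) := by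
      have h0 : Real.log (r / R') ≤ r / R' - 1 :=
        Real.log_le_sub_one_of_pos (div_pos hr0 hR'0)
      have h1 : Real.log (R' / r) = -Real.log (r / R') := by
        rw [← Real.log_inv, inv_div]
      have key : R' - r ≤ 1 - r / R' := by
        have h2 : r / R' ≤ 1 - R' + r := by
          rw [div_le_iff₀ hR'0]
          nlinarith
        linarith
      linarith
    have hfrac : 1 / (2 * (1 - r) ^ 2) ≤ 4 * r / (1 - r ^ 2) ^ 2 := by
      have h1 : 0 < 1 - r := by linarith
      have h2 : 0 < 1 + r := by linarith
      have h8 : (1 + r) ^ 2 ≤ 8 * r := by nlinarith [mul_nonneg hr0.le (sub_nonneg.mpr hr1.le)]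
      have hd1 : (0:ℝ) < 2 * (1 - r) ^ 2 := by nlinarith [mul_pos h1 h1]
      have hd2 : (0:ℝ) < (1 - r ^ 2) ^ 2 := by
        rw [show (1 - r ^ 2) = (1 - r) * (1 + r) by ring]
        exact pow_pos (mul_pos h1 h2) 2
      rw [div_le_div_iff₀ hd1 hd2]
      calc 1 * (1 - r ^ 2) ^ 2 = (1 + r) ^ 2 * (1 - r) ^ 2 := by ring
        _ ≤ 8 * r * (1 - r) ^ 2 := mul_le_mul_of_nonneg_right h8 (sq_nonneg _)
        _ = 4 * r * (2 * (1 - r) ^ 2) := by ring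
    have hlog0 : 0 ≤ Real.log (R' / r) := le_trans (by linarith) hlog
    calc A * ((R' - r) / (2 * (1 - r) ^ 2))
        = A * ((R' - r) * (1 / (2 * (1 - r) ^ 2))) := by ring
      _ ≤ A * (Real.log (R' / r) * (4 * r / (1 - r ^ 2) ^ 2)) := by
          apply mul_le_mul_of_nonneg_left ?_ hA0.le
          exact mul_le_mul hlog hfrac (by positivity) hlog0
      _ = r * (A * Real.log (R' / r) * (4 / (1 - r ^ 2) ^ 2)) := by ring
  -- compute the integral of bd over T2
  have h1R : (0:ℝ) < 1 - R := by linarith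
  have h1R' : (0:ℝ) < 1 - R' := by linarith
  have h6 : ∫ p in T2, bd p
      = ∫ r in Ioo R R', (2 * Real.pi) * (A * ((R' - r) / (2 * (1 - r) ^ 2))) := by
    rw [hT2, setIntegral_prod' _ _ hIntbd]
    apply setIntegral_congr_fun measurableSet_Ioo
    intro r _
    show ∫ y in Ioo (-Real.pi) Real.pi, A * ((R' - r) / (2 * (1 - r) ^ 2)) = _
    rw [setIntegral_const, measureReal_def, Real.volume_Ioo, ENNReal.toReal_ofReal (by linarith), smul_eq_mul]
    ring
  have h7 : ∫ r in Ioo R R', (2 * Real.pi) * (A * ((R' - r) / (2 * (1 - r) ^ 2)))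
      = Real.pi * A * ((R' - 1) / (1 - R') - Real.log (1 - R'))
        - Real.pi * A * ((R' - 1) / (1 - R) - Real.log (1 - R)) := by
    rw [← MeasureTheory.integral_Ioc_eq_integral_Ioo, ← intervalIntegral.integral_of_le hRR'.le]
    have hderiv : ∀ r ∈ uIcc R R',
        HasDerivAt (fun r => Real.pi * A * ((R' - 1) / (1 - r) - Real.log (1 - r)))
          ((2 * Real.pi) * (A * ((R' - r) / (2 * (1 - r) ^ 2)))) r := by
      intro r hr
      rw [uIcc_of_le hRR'.le] at hr
      have h1r : (0:ℝ) < 1 - r := by linarith [hr.2]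
      have h1rne : (1:ℝ) - r ≠ 0 := ne_of_gt h1r
      have hsub : HasDerivAt (fun r : ℝ => 1 - r) (-1) r := by
        simpa using (hasDerivAt_id r).const_sub 1
      have hinv : HasDerivAt (fun r : ℝ => (R' - 1) / (1 - r))
          ((R' - 1) * (-(-1) / (1 - r) ^ 2)) r := by
        have := (hsub.inv h1rne).const_mul (R' - 1)
        simpa [div_eq_mul_inv] using this
      have hlogd : HasDerivAt (fun r : ℝ => Real.log (1 - r)) ((1 - r)⁻¹ * (-1)) r :=
        (Real.hasDerivAt_log h1rne).comp r hsub
      have := (hinv.sub hlogd).const_mul (Real.pi * A)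
      refine this.congr_deriv ?_
      field_simp
      ring
    have hcont : ContinuousOn (fun r => (2 * Real.pi) * (A * ((R' - r) / (2 * (1 - r) ^ 2))))
        (uIcc R R') := by
      apply continuousOn_const.mul
      apply continuousOn_const.mul
      apply ContinuousOn.div (continuousOn_const.sub continuousOn_id)
        (((continuousOn_const.sub continuousOn_id).pow 2).const_smul (2:ℝ))
      intro r hr
      rw [uIcc_of_le hRR'.le] at hr
      have h1r : (0:ℝ) < 1 - r := by linarith [hr.2]
      simp only [Pi.smul_apply, Pi.pow_apply, Pi.sub_apply, id, smul_eq_mul]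
      positivity
    rw [intervalIntegral.integral_eq_sub_of_hasDerivAt hderiv hcont.intervalIntegrable]
  have hstep3 : Real.pi * A * (Real.log ((1 - R) / (1 - R')) - 1) ≤ ∫ p in T2, bd p := by
    rw [h6, h7]
    have hm1 : (R' - 1) / (1 - R') = -1 := by
      rw [show R' - 1 = -(1 - R') by ring, neg_div, div_self (ne_of_gt h1R')]
    have hlogdiv : Real.log ((1 - R) / (1 - R')) = Real.log (1 - R) - Real.log (1 - R') :=
      Real.log_div (ne_of_gt h1R) (ne_of_gt h1R')
    have hscal : Real.log ((1 - R) / (1 - R')) - 1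
        ≤ ((R' - 1) / (1 - R') - Real.log (1 - R'))
          - ((R' - 1) / (1 - R) - Real.log (1 - R)) := by
      rw [hlogdiv, hm1]
      have hfrac0 : 0 ≤ (1 - R') / (1 - R) := div_nonneg h1R'.le h1R.le
      have hneg : (R' - 1) / (1 - R) = -((1 - R') / (1 - R)) := by ring
      rw [hneg]
      linarith
    have := mul_le_mul_of_nonneg_left hscal (mul_nonneg hπ.le hA0.le)
    calc Real.pi * A * (Real.log ((1 - R) / (1 - R')) - 1)
        ≤ Real.pi * A * (((R' - 1) / (1 - R') - Real.log (1 - R'))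
          - ((R' - 1) / (1 - R) - Real.log (1 - R))) := this
      _ = Real.pi * A * ((R' - 1) / (1 - R') - Real.log (1 - R'))
          - Real.pi * A * ((R' - 1) / (1 - R) - Real.log (1 - R)) := by ring
  calc Real.pi * A * (Real.log ((1 - R) / (1 - R')) - 1)
      ≤ ∫ p in T2, bd p := hstep3
    _ ≤ ∫ p in T2, Gd p := hstep2
    _ ≤ ∫ p in polarCoord.target, Gd p := hstep1
    _ = ∫ z in ball (0:ℂ) 1, Fd z := hpolar.symm


end LapAux

open LapAux in
theorem laplacian_ratio_small :
    ∀ ε > (0 : ℝ), ∃ δ > (0 : ℝ), ∃ c > (0 : ℝ), ∀ R R' : ℝ,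
      1 - δ < R → R < R' → R' < 1 → 0 < R →
      (1 / 2) * Real.log ((1 + R') / (1 - R')) -
        (1 / 2) * Real.log ((1 + R) / (1 - R)) ≥ c →
      ∀ f : ℂ → ℝ, ContDiffOn ℝ 2 f (Metric.ball (0 : ℂ) 1) →
        (∃ M : ℝ, ∀ z ∈ Metric.ball (0 : ℂ) 1, |f z| ≤ M) →
        0 < supNormDisk f →
        |∫ z in Metric.ball (0 : ℂ) 1, phiRR R R' z * lap f z ∂volume| /
            (supNormDisk f *
              ∫ z in Metric.ball (0 : ℂ) 1,
                phiRR R R' z * (4 / (1 - ‖z‖ ^ 2) ^ 2) ∂volume) < ε := by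
  intro ε hε
  refine ⟨1/2, by norm_num, 1 + 4/ε, by positivity, ?_⟩
  intro R R' hδ hRR' hR'1 hR0 hρ f hf hbdd hsup
  have hRhalf : 1/2 < R := by linarith
  have hπ := Real.pi_pos
  have hL := logpos hR0 hRR' hR'1
  set A : ℝ := 1 / Real.log (R' / R) with hA
  have hA0 : 0 < A := by rw [hA]; positivity
  set M : ℝ := supNormDisk f with hM
  have hMb : ∀ z ∈ ball (0:ℂ) 1, |f z| ≤ M := by
    intro z hz
    apply le_csSup ?_ (mem_image_of_mem _ hz)
    obtain ⟨M₀, hM₀⟩ := hbdd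
    exact ⟨M₀, by rintro y ⟨z', hz', rfl⟩; exact hM₀ z' hz'⟩
  have hM0 : 0 < M := hsup
  -- the log lower bound coming from the hyperbolic distance hypothesis
  have h1R : (0:ℝ) < 1 - R := by linarith
  have h1R' : (0:ℝ) < 1 - R' := by linarith
  have hlogR : 2 * (1 + 4/ε) - 1 ≤ Real.log ((1 - R) / (1 - R')) := by
    have e1 : Real.log ((1 + R') / (1 - R')) = Real.log (1 + R') - Real.log (1 - R') :=
      Real.log_div (by linarith) (ne_of_gt h1R')
    have e2 : Real.log ((1 + R) / (1 - R)) = Real.log (1 + R) - Real.log (1 - R) :=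
      Real.log_div (by linarith) (ne_of_gt h1R)
    have e3 : Real.log ((1 - R) / (1 - R')) = Real.log (1 - R) - Real.log (1 - R') :=
      Real.log_div (ne_of_gt h1R) (ne_of_gt h1R')
    have h4 : Real.log (1 + R') ≤ Real.log 2 :=
      (Real.log_le_log_iff (by linarith) (by norm_num)).mpr (by linarith)
    have h5 : 0 ≤ Real.log (1 + R) := Real.log_nonneg (by linarith)
    have h6 : Real.log 2 ≤ 1 := by
      have := Real.log_le_sub_one_of_pos (by norm_num : (0:ℝ) < 2)
      linarith
    rw [e1, e2] at hρ
    rw [e3]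
    linarith
  have hnum := num_bound hR0 hRR' hR'1 hf hM0.le hMb
  have hden := den_bound hRhalf.le hRR' hR'1
  set D : ℝ := ∫ z in ball (0:ℂ) 1, phiRR R R' z * (4 / (1 - ‖z‖ ^ 2) ^ 2) with hD
  have hden2 : Real.pi * A * (8/ε) ≤ D := by
    apply le_trans ?_ hden
    rw [show Real.pi * A * (8/ε) = (Real.pi * A) * (8/ε) by ring,
      show Real.pi * A * (Real.log ((1 - R) / (1 - R')) - 1)
        = (Real.pi * A) * (Real.log ((1 - R) / (1 - R')) - 1) by ring]
    apply mul_le_mul_of_nonneg_left ?_ (mul_nonneg hπ.le hA0.le)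
    have h8 : 2 * (4/ε) = 8/ε := by ring
    linarith
  have hd : 0 < M * (Real.pi * A * (8/ε)) := by positivity
  have hbd : M * (Real.pi * A * (8/ε)) ≤ M * D := mul_le_mul_of_nonneg_left hden2 hM0.le
  have hmain : |∫ z in ball (0:ℂ) 1, phiRR R R' z * lap f z| / (M * D)
      ≤ (A * (4 * Real.pi * M)) / (M * (Real.pi * A * (8/ε))) :=
    div_le_div₀ (by positivity) hnum hd hbd
  have heq : (A * (4 * Real.pi * M)) / (M * (Real.pi * A * (8/ε))) = ε / 2 := by
    field_simp
    ring
  rw [heq] at hmain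
  calc |∫ z in ball (0:ℂ) 1, phiRR R R' z * lap f z| / (M * D) ≤ ε / 2 := hmain
    _ < ε := by linarith
end

section
/- For pairs (R, R') with 0 < R < R' < 1 define F(R,R') = ∫_R^{R'} log(R'/r) · r/(1 − r²)² dr and G(R,R') = (1/4) ∫_R^{R'} (R' − r)/(1 − r)² dr. Then F ∼ G: for every ε > 0 there exists δ > 0 such that |F(R,R')/G(R,R') − 1| < ε whenever 1 − δ < R < R' < 1. -/
/-!
On `[R, R']` the integrand `log (R'/r) · r/(1 - r²)²` is `(R' - r)/(1 - r)²` times a factor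
squeezed between `r/(1 + r)²` and `1/(1 + r)²`: the two bounds come from
`(R' - r)/R' ≤ log (R'/r) ≤ (R' - r)/r` and `R' ≤ 1`. Both bounds tend to `1/4` as `r → 1`,
so the integrands agree up to a factor `1 + o(1)`, uniformly in `R'`, and so do the integrals.
-/

open intervalIntegral Filter Topology

theorem abs_integral_div_integral_sub_one_le {f g : ℝ → ℝ} {a b ε : ℝ} (hab : a ≤ b)
    (hf : IntervalIntegrable f MeasureTheory.volume a b)
    (hg : IntervalIntegrable g MeasureTheory.volume a b) (hg_pos : 0 < ∫ x in a..b, g x)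
    (hfg : ∀ x ∈ Set.Icc a b, |f x - g x| ≤ ε * g x) :
    |(∫ x in a..b, f x) / (∫ x in a..b, g x) - 1| ≤ ε := by
  have h_diff : ‖∫ x in a..b, (f x - g x)‖ ≤ ∫ x in a..b, ε * g x :=
    norm_integral_le_of_norm_le hab
      (.of_forall fun x hx => hfg x (Set.Ioc_subset_Icc_self hx)) (hg.const_mul ε)
  rw [integral_sub hf hg, integral_const_mul, Real.norm_eq_abs] at h_diff
  rw [div_sub_one hg_pos.ne', abs_div, abs_of_pos hg_pos, div_le_iff₀ hg_pos]
  exact h_diff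

theorem eventually_four_div_one_add_sq_near_one {ε : ℝ} (hε : 0 < ε) :
    ∀ᶠ r in 𝓝 (1 : ℝ), 1 - ε ≤ 4 * r / (1 + r) ^ 2 ∧ 4 / (1 + r) ^ 2 ≤ 1 + ε := by
  have h_lower : Tendsto (fun r : ℝ => 4 * r / (1 + r) ^ 2) (𝓝 1) (𝓝 1) := by
    have : ContinuousAt (fun r : ℝ => 4 * r / (1 + r) ^ 2) 1 := by fun_prop (disch := norm_num)
    convert this.tendsto using 2
    norm_num
  have h_upper : Tendsto (fun r : ℝ => 4 / (1 + r) ^ 2) (𝓝 1) (𝓝 1) := by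
    have : ContinuousAt (fun r : ℝ => 4 / (1 + r) ^ 2) 1 := by fun_prop (disch := norm_num)
    convert this.tendsto using 2
    norm_num
  exact (h_lower.eventually_const_le (by linarith)).and
    (h_upper.eventually_le_const (by linarith))

theorem log_div_mul_div_sq_le {r R' : ℝ} (hr : 0 < r) (hrR' : r ≤ R') :
    Real.log (R' / r) * (r / (1 - r ^ 2) ^ 2) ≤
      4 / (1 + r) ^ 2 * ((1 / 4) * ((R' - r) / (1 - r) ^ 2)) := by
  have hR' : 0 < R' := hr.trans_le hrR'
  have h_log : Real.log (R' / r) ≤ (R' - r) / r := by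
    simpa [div_sub_one hr.ne'] using Real.log_le_sub_one_of_pos (by positivity : 0 < R' / r)
  calc Real.log (R' / r) * (r / (1 - r ^ 2) ^ 2)
      ≤ (R' - r) / r * (r / (1 - r ^ 2) ^ 2) := by gcongr
    _ = 4 / (1 + r) ^ 2 * ((1 / 4) * ((R' - r) / (1 - r) ^ 2)) := by
      rw [show 1 - r ^ 2 = (1 - r) * (1 + r) by ring]
      field_simp

theorem le_log_div_mul_div_sq {r R' : ℝ} (hr : 0 < r) (hrR' : r ≤ R') (hR' : R' ≤ 1) :
    4 * r / (1 + r) ^ 2 * ((1 / 4) * ((R' - r) / (1 - r) ^ 2)) ≤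
      Real.log (R' / r) * (r / (1 - r ^ 2) ^ 2) := by
  have hR'0 : 0 < R' := hr.trans_le hrR'
  have h_log : R' - r ≤ Real.log (R' / r) := by
    have := Real.one_sub_inv_le_log_of_pos (by positivity : 0 < R' / r)
    rw [inv_div, one_sub_div (by positivity)] at this
    exact le_trans (le_div_self (by linarith) (by positivity) hR') this
  calc
    _ = (R' - r) * (r / (1 - r ^ 2) ^ 2) := by
      rw [show 1 - r ^ 2 = (1 - r) * (1 + r) by ring]
      field_simp
    _ ≤ Real.log (R' / r) * (r / (1 - r ^ 2) ^ 2) := by gcongr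

theorem abs_log_div_mul_div_sq_sub_le {ε r R' : ℝ} (hr : 0 < r) (hrR' : r ≤ R')
    (hR' : R' ≤ 1) (h_near : 1 - ε ≤ 4 * r / (1 + r) ^ 2 ∧ 4 / (1 + r) ^ 2 ≤ 1 + ε) :
    |Real.log (R' / r) * (r / (1 - r ^ 2) ^ 2) - (1 / 4) * ((R' - r) / (1 - r) ^ 2)| ≤
      ε * ((1 / 4) * ((R' - r) / (1 - r) ^ 2)) := by
  have hg : 0 ≤ (1 / 4) * ((R' - r) / (1 - r) ^ 2) := by
    have : 0 ≤ R' - r := by linarith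
    positivity
  have h_lower := le_log_div_mul_div_sq hr hrR' hR'
  have h_upper := log_div_mul_div_sq_le hr hrR'
  rw [abs_sub_le_iff]
  constructor <;> nlinarith [h_near.1, h_near.2]

section Integrability

variable {R R' : ℝ}

theorem uIcc_subset_Ioo_zero_one (hR : 0 < R) (hRR' : R ≤ R') (hR' : R' < 1) :
    Set.uIcc R R' ⊆ Set.Ioo 0 1 := by
  rw [Set.uIcc_of_le hRR']
  exact Set.Icc_subset_Ioo hR hR'

theorem intervalIntegrable_log_div_mul_div_sq (hR : 0 < R) (hRR' : R ≤ R') (hR' : R' < 1) :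
    IntervalIntegrable (fun r => Real.log (R' / r) * (r / (1 - r ^ 2) ^ 2))
      MeasureTheory.volume R R' := by
  have hR'0 : 0 < R' := hR.trans_le hRR'
  refine (ContinuousOn.mono ?_ (uIcc_subset_Ioo_zero_one hR hRR' hR')).intervalIntegrable
  fun_prop (disch := rintro x ⟨hx0, hx1⟩; have : 0 < 1 - x ^ 2 := (by nlinarith); positivity)

theorem intervalIntegrable_sub_div_one_sub_sq (hR : 0 < R) (hRR' : R ≤ R') (hR' : R' < 1) :
    IntervalIntegrable (fun r => (R' - r) / (1 - r) ^ 2) MeasureTheory.volume R R' := by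
  refine (ContinuousOn.mono ?_ (uIcc_subset_Ioo_zero_one hR hRR' hR')).intervalIntegrable
  refine ContinuousOn.div (by fun_prop) (by fun_prop) ?_
  rintro x ⟨-, hx1⟩
  have : 0 < 1 - x := by linarith
  positivity

theorem integral_sub_div_one_sub_sq_pos (hR : 0 < R) (hRR' : R < R') (hR' : R' < 1) :
    0 < ∫ r in R..R', (R' - r) / (1 - r) ^ 2 := by
  refine intervalIntegral_pos_of_pos_on
    (intervalIntegrable_sub_div_one_sub_sq hR hRR'.le hR') (fun r ⟨_, hrR'⟩ => ?_) hRR'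
  have : 0 < R' - r := by linarith
  have : 0 < 1 - r := by linarith
  positivity

end Integrability

theorem second_term_sim :
    ∀ ε > (0 : ℝ), ∃ δ > (0 : ℝ), ∀ R R' : ℝ,
      1 - δ < R → R < R' → R' < 1 → 0 < R →
      |(∫ r in R..R', Real.log (R' / r) * (r / (1 - r ^ 2) ^ 2)) /
          ((1 / 4) * ∫ r in R..R', (R' - r) / (1 - r) ^ 2) - 1| < ε := by
  intro ε hε
  obtain ⟨δ, hδ, h_near⟩ :=
    Metric.eventually_nhds_iff.1 (eventually_four_div_one_add_sq_near_one (half_pos hε))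
  refine ⟨δ, hδ, fun R R' hR hRR' hR'1 hR0 => ?_⟩
  have hg_pos := integral_sub_div_one_sub_sq_pos hR0 hRR' hR'1
  rw [← integral_const_mul]
  refine (abs_integral_div_integral_sub_one_le hRR'.le
    (intervalIntegrable_log_div_mul_div_sq hR0 hRR'.le hR'1)
    ((intervalIntegrable_sub_div_one_sub_sq hR0 hRR'.le hR'1).const_mul _)
    (by rw [integral_const_mul]; positivity) fun r hr => ?_).trans_lt (half_lt_self hε)
  have h_dist : dist r 1 < δ := by
    rw [Real.dist_eq, abs_sub_comm, abs_of_pos (by linarith [hr.2])]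
    linarith [hr.1]
  exact abs_log_div_mul_div_sq_sub_le (hR0.trans_le hr.1) hr.2 hR'1.le (h_near h_dist)
end
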